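/- arXiv:2111.04591 — 8 statements merged into one kernel-verified Lean document; each statement's English description precedes it below -/
import Mathlib

section
/- Let Δ ∈ ℂ with Δ ∉ ℝ. Then the ratio λ_n = (n + 1 − Δ)/(n + conj(Δ)) is a real number for every integer n ∈ ℤ if and only if Re(Δ) = 1/2. (Note that since Δ is not real, the denominator n + conj(Δ) is nonzero for every n ∈ ℤ.) -/
/-- Reality constraint for the UIRs of SO(1,2): for non-real `Δ`, the ratio
`λ_n = (n + 1 − Δ)/(n + conj Δ)` is real for every `n : ℤ` iff `Re Δ = 1/2`. -/
theorem stmt0 (Δ : ℂ) (hΔ : Δ.im ≠ 0) :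
    (∀ n : ℤ, (((n : ℂ) + 1 - Δ) / ((n : ℂ) + (starRingEnd ℂ) Δ)).im = 0) ↔ Δ.re = 1/2 := by
  have key : ∀ n : ℤ, (((n : ℂ) + 1 - Δ) / ((n : ℂ) + (starRingEnd ℂ) Δ)).im
      = Δ.im * (1 - 2 * Δ.re) / Complex.normSq ((n : ℂ) + (starRingEnd ℂ) Δ) := by
    intro n
    rw [Complex.div_im]
    simp [Complex.normSq_apply]
    ring
  have hns : ∀ n : ℤ, Complex.normSq ((n : ℂ) + (starRingEnd ℂ) Δ) ≠ 0 := by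
    intro n
    intro h
    rw [Complex.normSq_eq_zero] at h
    have := congrArg Complex.im h
    simp at this
    exact hΔ this
  constructor
  · intro h
    have h0 := h 0
    rw [key 0] at h0
    rcases div_eq_zero_iff.mp h0 with h1 | h1
    · rcases mul_eq_zero.mp h1 with h2 | h2
      · exact absurd h2 hΔ
      · linarith
    · exact absurd h1 (hns 0)
  · intro h n
    rw [key n, h]
    norm_num
end

section
/- For every Δ ∈ ℂ, every n ∈ ℤ and every x ∈ ℝ, the function ψ_n^{(Δ)} satisfies the eigenvalue equation i·( ((1+x²)/2)·(ψ_n^{(Δ)})′(x) + Δ·x·ψ_n^{(Δ)}(x) ) = n·ψ_n^{(Δ)}(x). -/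
open Complex

/-!
The Cayley transform `w(x) = (1 - ix)/(1 + ix)` has logarithmic derivative `-2i/(1 + x²)` and
`(1 + x²)^(-Δ)` has logarithmic derivative `-2Δx/(1 + x²)`, so
`(1 + x²)/2 · ψ' = -(i n + Δ x) ψ`: the `Δ x ψ` term cancels and `i · (-i n ψ) = n ψ`.
-/

/-- The basis wavefunction `ψ_n^{(Δ)}(x) = (2π)^{-1/2} ((1-ix)/(1+ix))^n 2^Δ (1+x²)^{-Δ}`,
with complex powers on the principal branch. -/
noncomputable def psi (Δ : ℂ) (n : ℤ) (x : ℝ) : ℂ :=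
  ((Real.sqrt (2 * Real.pi) : ℂ))⁻¹ * ((1 - Complex.I * x) / (1 + Complex.I * x)) ^ n
    * (2 : ℂ) ^ Δ * ((1 : ℂ) + (x : ℂ) ^ 2) ^ (-Δ)

namespace Complex

lemma one_add_ofReal_sq_eq_ofReal (x : ℝ) : 1 + (x : ℂ) ^ 2 = ((1 + x ^ 2 : ℝ) : ℂ) := by
  push_cast; rfl

lemma one_add_ofReal_sq_mem_slitPlane (x : ℝ) : 1 + (x : ℂ) ^ 2 ∈ slitPlane := by
  rw [one_add_ofReal_sq_eq_ofReal]
  exact ofReal_mem_slitPlane.2 (by positivity)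

lemma one_add_ofReal_sq_ne_zero (x : ℝ) : 1 + (x : ℂ) ^ 2 ≠ 0 :=
  slitPlane_ne_zero (one_add_ofReal_sq_mem_slitPlane x)

lemma one_add_ofReal_sq_eq_mul (x : ℝ) : 1 + (x : ℂ) ^ 2 = (1 - I * x) * (1 + I * x) := by
  linear_combination (x : ℂ) ^ 2 * I_sq

lemma one_add_I_mul_ofReal_ne_zero (x : ℝ) : 1 + I * x ≠ 0 :=
  right_ne_zero_of_mul (one_add_ofReal_sq_eq_mul x ▸ one_add_ofReal_sq_ne_zero x)

lemma one_sub_I_mul_ofReal_ne_zero (x : ℝ) : 1 - I * x ≠ 0 :=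
  left_ne_zero_of_mul (one_add_ofReal_sq_eq_mul x ▸ one_add_ofReal_sq_ne_zero x)

end Complex

lemma hasDerivAt_cayley (x : ℝ) :
    HasDerivAt (fun y : ℝ => (1 - I * y) / (1 + I * y))
      (-2 * I / (1 + I * x) ^ 2) x := by
  have hy := (hasDerivAt_id (x : ℂ)).comp_ofReal
  refine (((hy.const_mul I).const_sub 1).div ((hy.const_mul I).const_add 1)
    (one_add_I_mul_ofReal_ne_zero x)).congr_deriv ?_
  simp only [id, mul_one]
  ring

lemma hasDerivAt_cayley_zpow (n : ℤ) (x : ℝ) :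
    HasDerivAt (fun y : ℝ => ((1 - I * y) / (1 + I * y)) ^ n)
      (-2 * n * I / (1 + (x : ℂ) ^ 2) * ((1 - I * x) / (1 + I * x)) ^ n) x := by
  have hw : (1 - I * x) / (1 + I * x) ≠ 0 :=
    div_ne_zero (one_sub_I_mul_ofReal_ne_zero x) (one_add_I_mul_ofReal_ne_zero x)
  refine ((hasDerivAt_zpow n _ (Or.inl hw)).comp x (hasDerivAt_cayley x)).congr_deriv ?_
  rw [zpow_sub_one₀ hw, one_add_ofReal_sq_eq_mul]
  field_simp [one_sub_I_mul_ofReal_ne_zero x, one_add_I_mul_ofReal_ne_zero x]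

lemma hasDerivAt_one_add_sq_cpow (s : ℂ) (x : ℝ) :
    HasDerivAt (fun y : ℝ => (1 + (y : ℂ) ^ 2) ^ s)
      (2 * s * x / (1 + (x : ℂ) ^ 2) * (1 + (x : ℂ) ^ 2) ^ s) x := by
  have hq : HasDerivAt (fun z : ℂ => 1 + z ^ 2) (2 * (x : ℂ)) (x : ℂ) := by
    simpa using ((hasDerivAt_id (x : ℂ)).pow 2).const_add 1
  refine ((hq.cpow_const (c := s) (one_add_ofReal_sq_mem_slitPlane x)).comp_ofReal).congr_deriv
    ?_
  rw [cpow_sub _ _ (one_add_ofReal_sq_ne_zero x), cpow_one]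
  ring

lemma hasDerivAt_psi (Δ : ℂ) (n : ℤ) (x : ℝ) :
    HasDerivAt (psi Δ n) (-2 * (n * I + Δ * x) / (1 + (x : ℂ) ^ 2) * psi Δ n x) x := by
  refine ((((hasDerivAt_cayley_zpow n x).const_mul (Real.sqrt (2 * Real.pi) : ℂ)⁻¹).mul_const
    ((2 : ℂ) ^ Δ)).mul (hasDerivAt_one_add_sq_cpow (-Δ) x)).congr_deriv ?_
  unfold psi
  ring

/-- `ψ_n^{(Δ)}` is an eigenfunction of `L₀ = i((1+x²)/2 ∂_x + Δ x)` with eigenvalue `n`. -/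
theorem stmt2 (Δ : ℂ) (n : ℤ) (x : ℝ) :
    Complex.I * (((1 + (x : ℂ) ^ 2) / 2) * deriv (psi Δ n) x + Δ * (x : ℂ) * psi Δ n x)
      = (n : ℂ) * psi Δ n x := by
  rw [(hasDerivAt_psi Δ n x).deriv]
  field_simp [one_add_ofReal_sq_ne_zero x]
  linear_combination (-(n : ℂ) * psi Δ n x) * I_sq
end

section
/- Let s ∈ (0,1) be real and p ∈ ℝ with p ≠ 0. Then the improper integral lim_{T→∞} ∫_{−T}^{T} |x|^{−s} e^{ipx} dx exists and equals 2^{1−s} √π · ( Γ((1−s)/2) / Γ(s/2) ) · |p|^{s−1}. -/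
/-!
Both sides are even in `p` and the integrand is even in `x`, so it suffices to find the limit of
`∫₀ᵀ x^{-s} cos(qx) dx` for `q = |p| > 0`. Writing `x^{-s} = Γ(s)⁻¹ ∫₀^∞ t^{s-1} e^{-xt} dt` and
exchanging the integrals turns it into `Γ(s)⁻¹ ∫₀^∞ t^{s-1} L_T(t) dt`, where `L_T` is the
elementary Laplace transform of `cos(q·)` on `[0, T]`. As `T → ∞` the boundary part of `L_T`
contributes `O(T^{-s})`, leaving `Γ(s)⁻¹ ∫₀^∞ t^s / (t² + q²) dt`. The substitution
`u = t² / (1 + t²)` makes this a Beta integral, and Legendre's duplication formula brings the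
constant to the stated form.
-/

open Real Set Filter MeasureTheory Topology

lemma integral_rpow_mul_exp_neg_mul_Ioi' {a r : ℝ} (ha : 0 < a) (hr : 0 < r) :
    ∫ t in Ioi (0 : ℝ), t ^ (a - 1) * exp (-(r * t)) = r ^ (-a) * Gamma a := by
  rw [integral_rpow_mul_exp_neg_mul_Ioi ha hr, one_div, inv_rpow hr.le, rpow_neg hr.le]

lemma integrableOn_rpow_mul_exp_neg_mul_Ioi {a r : ℝ} (ha : 0 < a) (hr : 0 < r) :
    IntegrableOn (fun t : ℝ => t ^ (a - 1) * exp (-(r * t))) (Ioi 0) :=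
  Integrable.of_integral_ne_zero <| by
    rw [integral_rpow_mul_exp_neg_mul_Ioi ha hr]; positivity

lemma integral_rpow_mul_one_sub_rpow {a b : ℝ} (ha : 0 < a) (hb : 0 < b) :
    ∫ x in (0 : ℝ)..1, x ^ (a - 1) * (1 - x) ^ (b - 1) = Gamma a * Gamma b / Gamma (a + b) := by
  have h := Complex.betaIntegral_eq_Gamma_mul_div a b (by simpa using ha) (by simpa using hb)
  rw [Complex.betaIntegral, ← Complex.ofReal_add, Complex.Gamma_ofReal, Complex.Gamma_ofReal,
    Complex.Gamma_ofReal] at h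
  refine Complex.ofReal_injective ((intervalIntegral.integral_ofReal.symm.trans
    (intervalIntegral.integral_congr fun x hx => ?_)).trans (h.trans (by push_cast; rfl)))
  rw [uIcc_of_le zero_le_one] at hx
  simp only [Complex.ofReal_mul]
  rw [Complex.ofReal_cpow hx.1, Complex.ofReal_cpow (by linarith [hx.2])]
  push_cast
  rfl

lemma image_sq_div_one_add_sq_Ioi :
    (fun t : ℝ => t ^ 2 / (1 + t ^ 2)) '' Ioi 0 = Ioo 0 1 := by
  ext y
  constructor
  · rintro ⟨t, ht, rfl⟩
    have ht : 0 < t := ht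
    exact ⟨by positivity, (div_lt_one (by positivity)).mpr (by linarith)⟩
  · rintro ⟨hy0, hy1⟩
    have hy : 0 < 1 - y := by linarith
    refine ⟨√(y / (1 - y)), sqrt_pos.mpr (div_pos hy0 hy), ?_⟩
    beta_reduce
    rw [sq_sqrt (div_pos hy0 hy).le]
    field_simp
    ring

lemma injOn_sq_div_one_add_sq : InjOn (fun t : ℝ => t ^ 2 / (1 + t ^ 2)) (Ioi 0) := by
  intro t (ht : 0 < t) u (hu : 0 < u) h
  rw [div_eq_div_iff (by positivity) (by positivity)] at h
  nlinarith [mul_pos ht hu]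

lemma integral_rpow_div_one_add_sq {s : ℝ} (hs₀ : -1 < s) (hs₁ : s < 1) :
    ∫ t in Ioi (0 : ℝ), t ^ s / (1 + t ^ 2) = Gamma ((1 + s) / 2) * Gamma ((1 - s) / 2) / 2 := by
  have hderiv : ∀ t ∈ Ioi (0 : ℝ), HasDerivWithinAt (fun t : ℝ => t ^ 2 / (1 + t ^ 2))
      (2 * t / (1 + t ^ 2) ^ 2) (Ioi 0) t := by
    intro t _
    have hden : 1 + t ^ 2 ≠ 0 := by positivity
    refine (((hasDerivAt_pow 2 t).div ((hasDerivAt_pow 2 t).const_add 1) hden).congr_deriv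
      ?_).hasDerivWithinAt
    field_simp
    ring
  have hsubst := integral_image_eq_integral_abs_deriv_smul measurableSet_Ioi hderiv
    injOn_sq_div_one_add_sq (fun x => x ^ ((1 + s) / 2 - 1) * (1 - x) ^ ((1 - s) / 2 - 1))
  have hbeta := integral_rpow_mul_one_sub_rpow (a := (1 + s) / 2) (b := (1 - s) / 2)
    (by linarith) (by linarith)
  rw [intervalIntegral.integral_of_le zero_le_one, integral_Ioc_eq_integral_Ioo,
    ← image_sq_div_one_add_sq_Ioi, hsubst, show (1 + s) / 2 + (1 - s) / 2 = 1 by ring,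
    Gamma_one, div_one] at hbeta
  rw [← hbeta, ← integral_div]
  refine setIntegral_congr_fun measurableSet_Ioi fun t (ht : 0 < t) => ?_
  have hden : 0 < 1 + t ^ 2 := by positivity
  have h1 : (t ^ 2 / (1 + t ^ 2)) ^ ((1 + s) / 2 - 1) =
      t ^ (s - 1) * (1 + t ^ 2) ^ ((1 - s) / 2) := by
    rw [div_rpow (by positivity) hden.le, ← rpow_natCast_mul ht.le, div_eq_mul_inv,
      ← rpow_neg hden.le]
    ring_nf
  have h2 : (1 - t ^ 2 / (1 + t ^ 2)) ^ ((1 - s) / 2 - 1) = (1 + t ^ 2) ^ ((1 + s) / 2) := by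
    rw [show 1 - t ^ 2 / (1 + t ^ 2) = (1 + t ^ 2)⁻¹ by field_simp; ring, inv_rpow hden.le,
      ← rpow_neg hden.le]
    ring_nf
  rw [smul_eq_mul, h1, h2, mul_assoc, ← rpow_add hden,
    show (1 - s) / 2 + (1 + s) / 2 = 1 by ring, rpow_one, abs_of_nonneg (by positivity),
    rpow_sub_one ht.ne']
  field_simp

lemma integral_rpow_div_sq_add_sq {s q : ℝ} (hs₀ : -1 < s) (hs₁ : s < 1) (hq : 0 < q) :
    ∫ t in Ioi (0 : ℝ), t ^ s / (t ^ 2 + q ^ 2) =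
      q ^ (s - 1) * (Gamma ((1 + s) / 2) * Gamma ((1 - s) / 2) / 2) := by
  have hscale := integral_comp_mul_left_Ioi (fun t : ℝ => t ^ s / (t ^ 2 + q ^ 2)) 0 hq
  rw [mul_zero, smul_eq_mul, eq_inv_mul_iff_mul_eq₀ hq.ne'] at hscale
  rw [← hscale, ← integral_rpow_div_one_add_sq hs₀ hs₁, ← integral_const_mul,
    ← integral_const_mul]
  refine setIntegral_congr_fun measurableSet_Ioi fun t (ht : 0 < t) => ?_
  rw [mul_rpow hq.le ht.le, rpow_sub_one hq.ne']
  field_simp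
  ring

lemma integrableOn_rpow_div_sq_add_sq {s q : ℝ} (hs₀ : -1 < s) (hs₁ : s < 1) (hq : 0 < q) :
    IntegrableOn (fun t : ℝ => t ^ s / (t ^ 2 + q ^ 2)) (Ioi 0) :=
  Integrable.of_integral_ne_zero <| by
    have := Gamma_pos_of_pos (show 0 < (1 + s) / 2 by linarith)
    have := Gamma_pos_of_pos (show 0 < (1 - s) / 2 by linarith)
    rw [integral_rpow_div_sq_add_sq hs₀ hs₁ hq]
    positivity

lemma integral_exp_neg_mul_mul_cos {t : ℝ} (ht : t ≠ 0) (q T : ℝ) :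
    ∫ x in (0 : ℝ)..T, exp (-(x * t)) * cos (q * x) =
      (t + exp (-(T * t)) * (q * sin (q * T) - t * cos (q * T))) / (t ^ 2 + q ^ 2) := by
  have hden : t ^ 2 + q ^ 2 ≠ 0 := by positivity
  have hderiv : ∀ x : ℝ, HasDerivAt
      (fun x => exp (-(x * t)) * (q * sin (q * x) - t * cos (q * x)) / (t ^ 2 + q ^ 2))
      (exp (-(x * t)) * cos (q * x)) x := by
    intro x
    have hlin : HasDerivAt (fun x : ℝ => q * x) q x := by
      simpa using (hasDerivAt_id x).const_mul q
    have hexp : HasDerivAt (fun x : ℝ => exp (-(x * t))) (exp (-(x * t)) * -t) x := by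
      simpa using ((hasDerivAt_id x).mul_const t).neg.exp
    refine ((hexp.fun_mul ((hlin.sin.const_mul q).fun_sub (hlin.cos.const_mul t))).div_const
      _).congr_deriv ?_
    field_simp
    ring
  rw [intervalIntegral.integral_eq_sub_of_hasDerivAt (fun x _ => hderiv x)
    ((by fun_prop : Continuous fun x => exp (-(x * t)) * cos (q * x)).intervalIntegrable _ _)]
  simp only [zero_mul, neg_zero, exp_zero, mul_zero, sin_zero, cos_zero, mul_one, zero_sub, mul_neg,
    one_mul]
  ring

lemma integral_Ioc_rpow_neg_mul_eq {s C : ℝ} (hs₀ : 0 < s) (hs₁ : s < 1) {φ : ℝ → ℝ}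
    (hφ : Measurable φ) (hφC : ∀ x, |φ x| ≤ C) (T : ℝ) :
    ∫ x in Ioc 0 T, x ^ (-s) * φ x =
      (Gamma s)⁻¹ * ∫ t in Ioi 0, t ^ (s - 1) * ∫ x in Ioc 0 T, exp (-(x * t)) * φ x := by
  have hslice : ∀ x ∈ Ioc (0 : ℝ) T,
      ∫ t in Ioi 0, t ^ (s - 1) * exp (-(x * t)) * φ x = x ^ (-s) * Gamma s * φ x := by
    intro x hx
    rw [integral_mul_const, integral_rpow_mul_exp_neg_mul_Ioi' hs₀ hx.1]
  have hint : Integrable (Function.uncurry fun x t : ℝ => t ^ (s - 1) * exp (-(x * t)) * φ x)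
      ((volume.restrict (Ioc 0 T)).prod (volume.restrict (Ioi 0))) := by
    rw [integrable_prod_iff (by fun_prop)]
    refine ⟨ae_restrict_of_forall_mem measurableSet_Ioc fun x hx =>
      (integrableOn_rpow_mul_exp_neg_mul_Ioi hs₀ hx.1).mul_const (φ x), ?_⟩
    have hrpow : IntegrableOn (fun x : ℝ => x ^ (-s) * Gamma s) (Ioc 0 T) :=
      (intervalIntegral.intervalIntegrable_rpow' (by linarith)).1.mul_const _
    refine (hrpow.mul_bdd (c := C) hφ.norm.aestronglyMeasurable
      (ae_of_all _ fun x => by simpa using hφC x)).congr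
      (ae_restrict_of_forall_mem measurableSet_Ioc fun x hx => ?_)
    simp only [Function.uncurry_apply_pair, norm_mul]
    rw [← integral_rpow_mul_exp_neg_mul_Ioi' hs₀ hx.1, ← integral_mul_const]
    refine setIntegral_congr_fun measurableSet_Ioi fun t (ht : 0 < t) => ?_
    rw [norm_of_nonneg (rpow_pos_of_pos ht _).le, norm_of_nonneg (exp_pos _).le]
  calc ∫ x in Ioc 0 T, x ^ (-s) * φ x
      = ∫ x in Ioc 0 T, (Gamma s)⁻¹ * ∫ t in Ioi 0, t ^ (s - 1) * exp (-(x * t)) * φ x := by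
        refine setIntegral_congr_fun measurableSet_Ioc fun x hx => ?_
        rw [hslice x hx]
        field_simp [(Gamma_pos_of_pos hs₀).ne']
    _ = (Gamma s)⁻¹ * ∫ t in Ioi 0, t ^ (s - 1) * ∫ x in Ioc 0 T, exp (-(x * t)) * φ x := by
        rw [integral_const_mul, integral_integral_swap hint]
        simp only [← integral_const_mul, mul_assoc]

lemma abs_mul_sin_sub_mul_cos_div_le {q : ℝ} (hq : 0 < q) (t a : ℝ) :
    |q * sin a - t * cos a| / (t ^ 2 + q ^ 2) ≤ q⁻¹ := by
  have hden : 0 < t ^ 2 + q ^ 2 := by positivity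
  have hsq : (q * sin a - t * cos a) ^ 2 ≤ t ^ 2 + q ^ 2 := by
    nlinarith [sq_nonneg (q * cos a + t * sin a), sin_sq_add_cos_sq a]
  have key : |(q * sin a - t * cos a) * q| ≤ t ^ 2 + q ^ 2 :=
    abs_le_of_sq_le_sq (by nlinarith) hden.le
  rw [abs_mul, abs_of_pos hq] at key
  rwa [div_le_iff₀ hden, ← div_eq_inv_mul, le_div_iff₀ hq]

section LaplaceRemainder

variable {s q : ℝ} (hq : 0 < q)
include hq

lemma norm_rpow_mul_exp_mul_sin_sub_cos_le {t : ℝ} (ht : 0 < t) (T : ℝ) :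
    ‖t ^ (s - 1) * (exp (-(T * t)) * (q * sin (q * T) - t * cos (q * T)) / (t ^ 2 + q ^ 2))‖ ≤
      q⁻¹ * (t ^ (s - 1) * exp (-(T * t))) := by
  rw [norm_mul, norm_div, norm_mul, norm_of_nonneg (rpow_pos_of_pos ht _).le,
    norm_of_nonneg (exp_pos _).le, norm_of_nonneg (by positivity : 0 ≤ t ^ 2 + q ^ 2),
    Real.norm_eq_abs, mul_div_assoc, ← mul_assoc, mul_comm q⁻¹]
  gcongr
  exact abs_mul_sin_sub_mul_cos_div_le hq t _

variable (hs : 0 < s)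
include hs

lemma integrableOn_rpow_mul_exp_mul_sin_sub_cos {T : ℝ} (hT : 0 < T) :
    IntegrableOn (fun t : ℝ => t ^ (s - 1) *
      (exp (-(T * t)) * (q * sin (q * T) - t * cos (q * T)) / (t ^ 2 + q ^ 2))) (Ioi 0) :=
  ((integrableOn_rpow_mul_exp_neg_mul_Ioi hs hT).const_mul q⁻¹).mono' (by fun_prop)
    (ae_restrict_of_forall_mem measurableSet_Ioi fun _ ht =>
      norm_rpow_mul_exp_mul_sin_sub_cos_le hq ht T)

lemma tendsto_integral_rpow_mul_exp_mul_sin_sub_cos :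
    Tendsto (fun T : ℝ => ∫ t in Ioi 0, t ^ (s - 1) *
      (exp (-(T * t)) * (q * sin (q * T) - t * cos (q * T)) / (t ^ 2 + q ^ 2))) atTop (𝓝 0) := by
  refine squeeze_zero_norm' ?_ (by simpa using
    ((tendsto_rpow_neg_atTop hs).mul_const (Gamma s)).const_mul q⁻¹)
  filter_upwards [eventually_gt_atTop 0] with T hT
  rw [← integral_rpow_mul_exp_neg_mul_Ioi' hs hT, ← integral_const_mul]
  exact norm_integral_le_of_norm_le ((integrableOn_rpow_mul_exp_neg_mul_Ioi hs hT).const_mul _)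
    (ae_restrict_of_forall_mem measurableSet_Ioi fun _ ht =>
      norm_rpow_mul_exp_mul_sin_sub_cos_le hq ht T)

end LaplaceRemainder

lemma tendsto_integral_rpow_neg_mul_cos {s q : ℝ} (hs₀ : 0 < s) (hs₁ : s < 1) (hq : 0 < q) :
    Tendsto (fun T : ℝ => ∫ x in (0 : ℝ)..T, x ^ (-s) * cos (q * x)) atTop
      (𝓝 ((Gamma s)⁻¹ * (q ^ (s - 1) * (Gamma ((1 + s) / 2) * Gamma ((1 - s) / 2) / 2)))) := by
  rw [← integral_rpow_div_sq_add_sq (by linarith) hs₁ hq, ← add_zero (∫ t in Ioi 0, _)]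
  refine (((tendsto_integral_rpow_mul_exp_mul_sin_sub_cos hq hs₀).const_add _).const_mul
    _).congr' ?_
  filter_upwards [eventually_gt_atTop 0] with T hT
  rw [intervalIntegral.integral_of_le hT.le,
    integral_Ioc_rpow_neg_mul_eq hs₀ hs₁ (by fun_prop) (fun x => abs_cos_le_one (q * x)) T,
    ← integral_add (integrableOn_rpow_div_sq_add_sq (by linarith) hs₁ hq)
      (integrableOn_rpow_mul_exp_mul_sin_sub_cos hq hs₀ hT)]
  congr 1
  refine setIntegral_congr_fun measurableSet_Ioi fun t (ht : 0 < t) => ?_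
  rw [← intervalIntegral.integral_of_le hT.le, integral_exp_neg_mul_mul_cos ht.ne',
    rpow_sub_one ht.ne']
  field_simp

lemma intervalIntegral_neg_eq_integral_add_comp_neg {E : Type*} [NormedAddCommGroup E]
    [NormedSpace ℝ E] {g : ℝ → E} {T : ℝ} (hg : IntervalIntegrable g volume (-T) T) :
    ∫ x in -T..T, g x = ∫ x in (0 : ℝ)..T, (g x + g (-x)) := by
  have hzero : (0 : ℝ) ∈ uIcc (-T) T := by
    rcases le_total 0 T with hT | hT
    · exact mem_uIcc.mpr (Or.inl ⟨by linarith, hT⟩)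
    · exact mem_uIcc.mpr (Or.inr ⟨hT, by linarith⟩)
  have hleft : IntervalIntegrable g volume (-T) 0 := hg.mono_set (uIcc_subset_uIcc_left hzero)
  have hright : IntervalIntegrable g volume 0 T := hg.mono_set (uIcc_subset_uIcc_right hzero)
  have hneg : IntervalIntegrable (fun x => g (-x)) volume 0 T := by
    simpa using ((IntervalIntegrable.iff_comp_neg).mp hleft).symm
  rw [← intervalIntegral.integral_add_adjacent_intervals hleft hright,
    intervalIntegral.integral_add hright hneg, intervalIntegral.integral_comp_neg, neg_zero,
    add_comm]

lemma intervalIntegral_ofReal_mul_exp_of_even {f : ℝ → ℝ} (hf : ∀ x, f (-x) = f x) {T : ℝ}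
    (hfi : IntervalIntegrable f volume (-T) T) (p : ℝ) :
    ∫ x in -T..T, (f x : ℂ) * Complex.exp (Complex.I * p * x) =
      2 * ((∫ x in (0 : ℝ)..T, f x * cos (p * x) : ℝ) : ℂ) := by
  have hfi' : IntervalIntegrable (fun x => (f x : ℂ)) volume (-T) T :=
    ⟨hfi.1.ofReal, hfi.2.ofReal⟩
  rw [intervalIntegral_neg_eq_integral_add_comp_neg (hfi'.mul_continuousOn (by fun_prop)),
    ← intervalIntegral.integral_ofReal, ← intervalIntegral.integral_const_mul]
  refine intervalIntegral.integral_congr fun x _ => ?_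
  simp only [hf, Complex.ofReal_neg, Complex.ofReal_mul, Complex.ofReal_cos]
  rw [Complex.cos]
  ring_nf

lemma intervalIntegrable_abs_rpow {r : ℝ} (hr : -1 < r) (a b : ℝ) :
    IntervalIntegrable (fun x : ℝ => |x| ^ r) volume a b :=
  intervalIntegrable_of_even (fun x => by rw [abs_neg]) fun x hx =>
    (intervalIntegral.intervalIntegrable_rpow' hr).congr fun y hy => by
      rw [uIoc_of_le hx.le] at hy
      rw [abs_of_pos hy.1]

open Complex Filter

/-- Fourier transform of the power law `|x|^{−s}` on `ℝ` for `0 < s < 1`: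
the symmetric improper integral `∫_{−T}^{T} |x|^{−s} e^{ipx} dx` converges as `T → ∞`
to `2^{1−s} √π (Γ((1−s)/2)/Γ(s/2)) |p|^{s−1}`. -/
theorem stmt5 (s : ℝ) (hs : s ∈ Set.Ioo (0 : ℝ) 1) (p : ℝ) (hp : p ≠ 0) :
    Tendsto (fun T : ℝ => ∫ x in (-T)..T,
        ((|x| ^ (-s) : ℝ) : ℂ) * Complex.exp (Complex.I * p * x))
      atTop
      (nhds (((2 : ℝ) ^ (1 - s) * Real.sqrt Real.pi *
        (Real.Gamma ((1 - s) / 2) / Real.Gamma (s / 2)) * |p| ^ (s - 1) : ℝ) : ℂ)) := by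
  obtain ⟨hs₀, hs₁⟩ := hs
  have hlim := tendsto_integral_rpow_neg_mul_cos hs₀ hs₁ (abs_pos.mpr hp)
  have hconst : 2 * ((Real.Gamma s)⁻¹ * (|p| ^ (s - 1) *
      (Real.Gamma ((1 + s) / 2) * Real.Gamma ((1 - s) / 2) / 2))) =
      2 ^ (1 - s) * √π * (Real.Gamma ((1 - s) / 2) / Real.Gamma (s / 2)) * |p| ^ (s - 1) := by
    have hdup := Real.Gamma_mul_Gamma_add_half (s / 2)
    rw [show s / 2 + 1 / 2 = (1 + s) / 2 by ring, show 2 * (s / 2) = s by ring] at hdup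
    have := (Real.Gamma_pos_of_pos hs₀).ne'
    have := (Real.Gamma_pos_of_pos (half_pos hs₀)).ne'
    field_simp
    linear_combination hdup
  rw [← hconst, ofReal_mul, ofReal_ofNat]
  refine ((continuous_ofReal.tendsto _).comp hlim).const_mul 2 |>.congr' ?_
  filter_upwards [eventually_ge_atTop 0] with T hT
  rw [intervalIntegral_ofReal_mul_exp_of_even (fun x => by rw [abs_neg])
    (intervalIntegrable_abs_rpow (by linarith) _ _), Function.comp_apply]
  congr 2
  refine intervalIntegral.integral_congr fun x hx => ?_
  rw [uIcc_of_le hT] at hx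
  rcases abs_choice p with hp' | hp' <;> simp [abs_of_nonneg hx.1, hp']
end

section
/- Let N ≥ 1 and n ≥ N be integers. Then for every x ∈ ℝ: (d/dx)^{2N−1} ψ_n^{(1−N)}(x) = i·(−1)^N · ( (N+n−1)! / (n−N)! ) · ψ_n^{(N)}(x). -/
open Complex Finset

lemma auxY_ne (x : ℝ) : (1 : ℂ) + Complex.I * x ≠ 0 := by
  intro h
  simpa using congrArg Complex.re h

lemma auxX_ne (x : ℝ) : (1 : ℂ) - Complex.I * x ≠ 0 := by
  intro h
  simpa using congrArg Complex.re h

lemma aux_contDiff (e : ℤ) : ContDiff ℝ (⊤ : ℕ∞) (fun x : ℝ => ((1:ℂ) + Complex.I*x)^e) := by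
  have hb : ContDiff ℝ (⊤ : ℕ∞) (fun x : ℝ => (1:ℂ) + Complex.I * x) :=
    contDiff_const.add (contDiff_const.mul Complex.ofRealCLM.contDiff)
  rcases le_or_gt 0 e with he | he
  · obtain ⟨p, rfl⟩ := Int.eq_ofNat_of_zero_le he
    simpa [zpow_natCast] using hb.pow p
  · obtain ⟨p, rfl⟩ := Int.exists_eq_neg_ofNat he.le
    simp only [zpow_neg, zpow_natCast]
    exact (hb.pow p).inv fun x => pow_ne_zero _ (auxY_ne x)

lemma aux_hasDerivAt (e : ℤ) (x : ℝ) :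
    HasDerivAt (fun x : ℝ => ((1:ℂ) + Complex.I*x)^e)
      ((e:ℂ) * ((1:ℂ) + Complex.I*x)^(e-1) * Complex.I) x := by
  have h1 : HasDerivAt (fun z : ℂ => (1:ℂ) + Complex.I * z) Complex.I (x:ℂ) := by
    simpa using ((hasDerivAt_id (x:ℂ)).const_mul Complex.I).const_add 1
  have h2 : HasDerivAt (fun z : ℂ => z ^ e)
      ((e:ℂ) * ((1:ℂ) + Complex.I*x)^(e-1)) ((1:ℂ) + Complex.I*x) :=
    hasDerivAt_zpow e _ (Or.inl (auxY_ne x))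
  exact (h2.comp (x:ℂ) h1).comp_ofReal

lemma aux_iter (e : ℤ) (k : ℕ) :
    iteratedDeriv k (fun x : ℝ => ((1:ℂ) + Complex.I*x)^e)
      = fun x : ℝ => Complex.I^k * (∏ t ∈ Finset.range k, ((e:ℂ) - t))
          * ((1:ℂ) + Complex.I*x)^(e - k) := by
  induction k with
  | zero => simp
  | succ k ih =>
    rw [iteratedDeriv_succ, ih]
    funext x
    have h := ((aux_hasDerivAt (e - k) x).const_mul
      (Complex.I^k * (∏ t ∈ Finset.range k, ((e:ℂ) - t)))).deriv
    rw [h, Finset.prod_range_succ]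
    have : ((e : ℤ) - (k:ℕ) : ℤ) - 1 = e - ((k:ℕ)+1 : ℕ) := by push_cast; ring
    rw [this]
    push_cast
    ring

lemma aux_prod (d m : ℕ) :
    (∏ t ∈ Finset.range m, ((-1 - (d:ℂ)) - t)) * (d.factorial : ℂ)
      = (-1)^m * ((d+m).factorial : ℂ) := by
  induction m with
  | zero => simp
  | succ m ih =>
    rw [Finset.prod_range_succ, mul_right_comm, ih]
    have : (d + (m+1)).factorial = (d + m).factorial * (d + m + 1) := by
      rw [← Nat.add_assoc, Nat.factorial_succ]; ring
    rw [this]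
    push_cast
    ring

lemma aux_vanish (e : ℤ) (m : ℕ) (h0 : 0 ≤ e) (h1 : e < m) :
    ∏ t ∈ Finset.range m, ((e:ℂ) - t) = 0 := by
  refine Finset.prod_eq_zero (Finset.mem_range.2 (show e.toNat < m by omega)) ?_
  have : ((e.toNat : ℤ) : ℂ) = (e : ℂ) := by rw [Int.toNat_of_nonneg h0]
  push_cast at this ⊢
  rw [← this]; ring

lemma aux_comb (m d i : ℕ) (hi : i ≤ d) :
    (m+d).choose (m+i) * (m+i).factorial * d.factorial
      = (m+d).factorial * (d.choose i) * i.factorial := by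
  have h1 := Nat.choose_mul_factorial_mul_factorial (show m+i ≤ m+d by omega)
  have h2 := Nat.choose_mul_factorial_mul_factorial hi
  rw [Nat.add_sub_add_left] at h1
  calc (m+d).choose (m+i) * (m+i).factorial * d.factorial
      = (m+d).choose (m+i) * (m+i).factorial * ((d.choose i) * i.factorial * (d-i).factorial) := by
        rw [h2]
    _ = ((m+d).choose (m+i) * (m+i).factorial * (d-i).factorial) * ((d.choose i) * i.factorial) := by
        ring
    _ = (m+d).factorial * (d.choose i) * i.factorial := by rw [h1]; ring

lemma aux_iteratedDeriv_add {k : ℕ} {f g : ℝ → ℂ} (hf : ContDiff ℝ (⊤ : ℕ∞) f) (hg : ContDiff ℝ (⊤ : ℕ∞) g)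
    (x : ℝ) :
    iteratedDeriv k (fun x => f x + g x) x = iteratedDeriv k f x + iteratedDeriv k g x := by
  simp only [← iteratedDerivWithin_univ]
  exact iteratedDerivWithin_add (Set.mem_univ x) uniqueDiffOn_univ
    ((hf.of_le (by exact_mod_cast le_top)).contDiffWithinAt) ((hg.of_le (by exact_mod_cast le_top)).contDiffWithinAt)

lemma aux_iteratedDeriv_const_mul {k : ℕ} (c : ℂ) {f : ℝ → ℂ} (hf : ContDiff ℝ (⊤ : ℕ∞) f) (x : ℝ) :
    iteratedDeriv k (fun x => c * f x) x = c * iteratedDeriv k f x := by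
  simp only [← iteratedDerivWithin_univ]
  simpa [smul_eq_mul] using iteratedDerivWithin_const_smul (Set.mem_univ x) uniqueDiffOn_univ c
    ((hf.of_le (by simp)).contDiffOn (n := (k:ℕ∞)))

lemma aux_iteratedDeriv_sum {k : ℕ} (s : Finset ℕ) (F : ℕ → ℝ → ℂ)
    (h : ∀ i ∈ s, ContDiff ℝ (⊤ : ℕ∞) (F i)) (x : ℝ) :
    iteratedDeriv k (fun x => ∑ i ∈ s, F i x) x = ∑ i ∈ s, iteratedDeriv k (F i) x := by
  induction s using Finset.cons_induction with
  | empty =>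
    rw [iteratedDeriv_eq_iterate]
    simp [Function.iterate_fixed (f := deriv (𝕜 := ℝ) (F := ℂ))
      (by simp : deriv (fun _ : ℝ => (0:ℂ)) = fun _ => 0) k]
  | cons a s ha ih =>
    simp only [Finset.sum_cons]
    rw [← ih (fun i hi => h i (Finset.mem_cons_of_mem hi))]
    exact aux_iteratedDeriv_add (h a (Finset.mem_cons_self a s))
      (ContDiff.sum fun i hi => h i (Finset.mem_cons_of_mem hi)) x

lemma aux_psi (Δi : ℤ) (n : ℤ) (x : ℝ) :
    psi (Δi : ℂ) n x = ((Real.sqrt (2 * Real.pi) : ℂ))⁻¹ * (2:ℂ)^Δi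
      * ((1:ℂ) - Complex.I*x)^(n - Δi) * ((1:ℂ) + Complex.I*x)^(-n - Δi) := by
  have hX := auxX_ne x
  have hY := auxY_ne x
  have hxx : (1:ℂ) + (x:ℂ)^2 = ((1:ℂ) - Complex.I*x) * ((1:ℂ) + Complex.I*x) := by
    linear_combination ((x:ℂ)^2) * Complex.I_sq
  rw [psi]
  rw [show -((Δi:ℤ):ℂ) = ((-Δi : ℤ):ℂ) from by push_cast; ring]
  rw [Complex.cpow_intCast, Complex.cpow_intCast, hxx, mul_zpow]
  have hdiv : (((1:ℂ) - Complex.I*x) / ((1:ℂ) + Complex.I*x))^n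
      = ((1:ℂ) - Complex.I*x)^n * ((1:ℂ) + Complex.I*x)^(-n) := by
    rw [div_eq_mul_inv, mul_zpow, inv_zpow, zpow_neg]
  rw [hdiv, show n - Δi = n + (-Δi) from by ring, show -n - Δi = -n + (-Δi) from by ring,
    zpow_add₀ hX, zpow_add₀ hY]
  ring

lemma aux_expand (K : ℂ) (A : ℕ) (b : ℤ) (x : ℝ) :
    K * ((1:ℂ) - Complex.I*x)^A * ((1:ℂ) + Complex.I*x)^b
      = ∑ j ∈ Finset.range (A+1),
          (K * 2^j * (-1)^(A-j) * ((A.choose j : ℕ) : ℂ))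
            * ((1:ℂ) + Complex.I*x)^(b + ((A - j : ℕ) : ℤ)) := by
  have hY := auxY_ne x
  have h2 : (1:ℂ) - Complex.I*x = 2 + (-((1:ℂ) + Complex.I*x)) := by ring
  rw [h2, add_pow, Finset.mul_sum, Finset.sum_mul]
  refine Finset.sum_congr rfl fun j hj => ?_
  rw [neg_pow, zpow_add₀ hY, zpow_natCast]
  ring

/-- Explicit action of the intertwining operator `∂_x^{2N−1} : F_{1−N} → F_N` on the
basis: `∂_x^{2N−1} ψ_n^{(1−N)} = i(−1)^N ((N+n−1)!/(n−N)!) ψ_n^{(N)}` for `n ≥ N ≥ 1`. -/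
theorem stmt10 (N n : ℕ) (hN : 1 ≤ N) (hn : N ≤ n) (x : ℝ) :
    iteratedDeriv (2 * N - 1) (psi (1 - (N : ℂ)) (n : ℤ)) x
      = Complex.I * (-1) ^ N
          * ((Nat.factorial (N + n - 1) : ℂ) / (Nat.factorial (n - N) : ℂ))
          * psi ((N : ℂ)) (n : ℤ) x := by
  obtain ⟨M, rfl⟩ : ∃ M, N = M + 1 := ⟨N - 1, by omega⟩
  obtain ⟨d, rfl⟩ : ∃ d, n = (M + 1) + d := ⟨n - (M+1), by omega⟩
  have hX := auxX_ne x
  have hY := auxY_ne x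
  set c : ℂ := ((Real.sqrt (2 * Real.pi) : ℂ))⁻¹ with hc
  -- normalize the ℕ-subtraction arithmetic
  rw [show 2 * (M+1) - 1 = 2*M+1 from by omega,
      show (M+1) + ((M+1)+d) - 1 = 2*M+1+d from by omega,
      show ((M+1)+d) - (M+1) = d from by omega]
  -- rewrite the LHS ψ as a finite sum of monomials in (1 + i x)
  have hL : psi (1 - ((M+1 : ℕ) : ℂ)) (((M+1)+d : ℕ) : ℤ)
      = fun y : ℝ => ∑ j ∈ Finset.range (2*M+1+d+1),
          ((c * (2:ℂ)^(-(M:ℤ))) * 2^j * (-1)^((2*M+1+d)-j) * (((2*M+1+d).choose j : ℕ) : ℂ))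
            * ((1:ℂ) + Complex.I*y)^((-((d:ℤ)+1)) + (((2*M+1+d) - j : ℕ) : ℤ)) := by
    funext y
    have h1 : (1 - ((M+1 : ℕ) : ℂ)) = ((-(M:ℤ) : ℤ) : ℂ) := by push_cast; ring
    rw [h1, aux_psi]
    rw [show (((M+1)+d : ℕ) : ℤ) - (-(M:ℤ)) = ((2*M+1+d : ℕ) : ℤ) from by push_cast; ring,
        show -(((M+1)+d : ℕ) : ℤ) - (-(M:ℤ)) = -((d:ℤ)+1) from by push_cast; ring,
        zpow_natCast]
    exact aux_expand (c * (2:ℂ)^(-(M:ℤ))) (2*M+1+d) (-((d:ℤ)+1)) y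
  rw [hL]
  rw [aux_iteratedDeriv_sum _ _ (fun j hj => contDiff_const.mul (aux_contDiff _)) x]
  -- compute each iterated derivative
  have hterm : ∀ j ∈ Finset.range (2*M+1+d+1),
      iteratedDeriv (2*M+1) (fun y : ℝ =>
        ((c * (2:ℂ)^(-(M:ℤ))) * 2^j * (-1)^((2*M+1+d)-j) * (((2*M+1+d).choose j : ℕ) : ℂ))
          * ((1:ℂ) + Complex.I*y)^((-((d:ℤ)+1)) + (((2*M+1+d) - j : ℕ) : ℤ))) x
      = ((c * (2:ℂ)^(-(M:ℤ))) * 2^j * (-1)^((2*M+1+d)-j) * (((2*M+1+d).choose j : ℕ) : ℂ))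
          * (Complex.I^(2*M+1)
            * (∏ t ∈ Finset.range (2*M+1),
                (((((-((d:ℤ)+1)) + (((2*M+1+d) - j : ℕ) : ℤ)) : ℤ) : ℂ) - t))
            * ((1:ℂ) + Complex.I*x)^((((-((d:ℤ)+1)) + (((2*M+1+d) - j : ℕ) : ℤ))) - (2*M+1 : ℕ))) := by
    intro j hj
    rw [aux_iteratedDeriv_const_mul _ (aux_contDiff _) x, aux_iter]
  rw [Finset.sum_congr rfl hterm]
  -- split the sum
  rw [show 2*M+1+d+1 = (2*M+1) + (d+1) from by omega, Finset.sum_range_add]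
  have hzero : ∀ j ∈ Finset.range (2*M+1),
      ((c * (2:ℂ)^(-(M:ℤ))) * 2^j * (-1)^((2*M+1+d)-j) * (((2*M+1+d).choose j : ℕ) : ℂ))
          * (Complex.I^(2*M+1)
            * (∏ t ∈ Finset.range (2*M+1),
                (((((-((d:ℤ)+1)) + (((2*M+1+d) - j : ℕ) : ℤ)) : ℤ) : ℂ) - t))
            * ((1:ℂ) + Complex.I*x)^((((-((d:ℤ)+1)) + (((2*M+1+d) - j : ℕ) : ℤ))) - (2*M+1 : ℕ))) = 0 := by
    intro j hj
    rw [Finset.mem_range] at hj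
    rw [aux_vanish _ _ (by omega) (by omega)]
    ring
  rw [Finset.sum_eq_zero hzero, zero_add]
  -- rewrite the RHS ψ as a finite sum
  have h2 : ((M+1 : ℕ) : ℂ) = (((M+1 : ℕ) : ℤ) : ℂ) := by push_cast; ring
  rw [h2, aux_psi]
  rw [show (((M+1)+d : ℕ) : ℤ) - ((M+1 : ℕ) : ℤ) = ((d:ℕ) : ℤ) from by push_cast; ring]
  rw [show ((1:ℂ) - Complex.I*x)^((d:ℕ) : ℤ) = ((1:ℂ) - Complex.I*x)^(d:ℕ) from zpow_natCast _ _,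
      ← hc]
  rw [show Complex.I * (-1)^(M+1) * (((2*M+1+d).factorial : ℂ) / ((d.factorial : ℕ) : ℂ))
        * (c * (2:ℂ)^(((M+1:ℕ):ℤ)) * ((1:ℂ) - Complex.I*x)^(d:ℕ)
            * ((1:ℂ) + Complex.I*x)^(-(((M+1)+d : ℕ) : ℤ) - ((M+1 : ℕ) : ℤ)))
      = (Complex.I * (-1)^(M+1) * (((2*M+1+d).factorial : ℂ) / ((d.factorial : ℕ) : ℂ))
          * (c * (2:ℂ)^(((M+1:ℕ):ℤ)))) * ((1:ℂ) - Complex.I*x)^(d:ℕ)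
            * ((1:ℂ) + Complex.I*x)^(-(((M+1)+d : ℕ) : ℤ) - ((M+1 : ℕ) : ℤ)) from by ring]
  rw [aux_expand]
  -- compare termwise
  refine Finset.sum_congr rfl fun i hi => ?_
  rw [Finset.mem_range] at hi
  rw [show 2*M+1+d-(2*M+1+i) = d - i from by omega,
      show (-((d:ℤ)+1) + ((d - i : ℕ) : ℤ)) = -1 - (i:ℤ) from by omega,
      show (-(((M+1)+d : ℕ) : ℤ) - ((M+1 : ℕ) : ℤ)) + ((d - i : ℕ) : ℤ)
        = -1 - (i:ℤ) - ((2*M+1 : ℕ) : ℤ) from by omega]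
  simp only [show ((-1 - (i:ℤ) : ℤ) : ℂ) = -1 - (i:ℂ) from by push_cast; ring]
  have hP : (∏ t ∈ Finset.range (2*M+1), ((-1 - (i:ℂ)) - (t:ℂ)))
      = -(((i+(2*M+1)).factorial : ℂ) / (i.factorial : ℂ)) := by
    rw [← neg_div, eq_div_iff (Nat.cast_ne_zero.mpr (Nat.factorial_ne_zero i)),
      aux_prod i (2*M+1), pow_succ, pow_mul]
    norm_num
  rw [hP]
  rw [show Complex.I^(2*M+1) = (-1)^M * Complex.I from by rw [pow_succ, pow_mul, Complex.I_sq],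
      show ((2:ℂ))^(((M+1:ℕ)):ℤ) = (2:ℂ)^((M+1:ℕ)) from zpow_natCast _ _]
  rw [show c * (2:ℂ)^(-(M:ℤ)) * 2^(2*M+1+i) = c * 2^(M+1+i) from by
    rw [mul_assoc]
    congr 1
    rw [← zpow_natCast (2:ℂ) (2*M+1+i), ← zpow_natCast (2:ℂ) (M+1+i),
      ← zpow_add₀ (two_ne_zero) (-(M:ℤ))]
    congr 1
    push_cast
    ring]
  have hcomb := aux_comb (2*M+1) d i (by omega)
  have hcomb' := congrArg (Nat.cast (R := ℂ)) hcomb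
  push_cast at hcomb'
  rw [show i + (2*M+1) = 2*M+1+i from by omega]
  have hfi : (i.factorial:ℂ) ≠ 0 := Nat.cast_ne_zero.mpr (Nat.factorial_ne_zero i)
  have hfd : (d.factorial:ℂ) ≠ 0 := Nat.cast_ne_zero.mpr (Nat.factorial_ne_zero d)
  field_simp
  linear_combination (-(c * 2^(M+1+i) * (-1)^M)) * hcomb'
end

section
/- Let d ≥ 1 and let z, ξ ∈ ℂ^d with z·z = Σ_{i=1}^d z_i² = 0 (a complex null vector, bilinear dot product without conjugation). For x ∈ ℝ^d \ {0} set v(x) = (2(x·z)/|x|²)·x − z ∈ ℂ^d, and let D_z denote the directional derivative D_z f = Σ_{i=1}^d z_i ∂f/∂x_i. Then for every integer n ≥ 0 and every x ∈ ℝ^d \ {0}: D_z^n [ (x·ξ)^n / |x|² ] (x) = (−1)^n · n! · (v(x)·ξ)^n / |x|². -/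
open Complex

/-- The directional derivative `D_z f = Σ_i z_i ∂f/∂x_i` along a complex vector `z`,
acting on functions `ℝ^d → ℂ`. -/
noncomputable def dirDeriv {d : ℕ} (z : Fin d → ℂ) (f : (Fin d → ℝ) → ℂ) :
    (Fin d → ℝ) → ℂ :=
  fun x => ∑ i, z i * fderiv ℝ f x (Pi.single i 1)

namespace Stmt13Aux

open Finset

variable {d : ℕ}

/-- Contraction of a continuous linear map with the complex vector `z`. -/
noncomputable def vval (z : Fin d → ℂ) (L : (Fin d → ℝ) →L[ℝ] ℂ) : ℂ :=
  ∑ i, z i * L (Pi.single i 1)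

/-- `f` has directional derivative value `g` along `z` at `x`. -/
def DD (z : Fin d → ℂ) (f : (Fin d → ℝ) → ℂ) (g : ℂ) (x : Fin d → ℝ) : Prop :=
  ∃ L, HasFDerivAt f L x ∧ vval z L = g

variable {z : Fin d → ℂ} {x : Fin d → ℝ}

lemma vval_add (L M : (Fin d → ℝ) →L[ℝ] ℂ) :
    vval z (L + M) = vval z L + vval z M := by
  simp [vval, mul_add, Finset.sum_add_distrib]

lemma vval_smul (a : ℂ) (L : (Fin d → ℝ) →L[ℝ] ℂ) :
    vval z (a • L) = a * vval z L := by
  simp only [vval, ContinuousLinearMap.smul_apply, smul_eq_mul, Finset.mul_sum]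
  exact Finset.sum_congr rfl fun i _ => by ring

lemma DD.dirDeriv {f : (Fin d → ℝ) → ℂ} {g : ℂ} (h : DD z f g x) :
    dirDeriv z f x = g := by
  obtain ⟨L, hL, hv⟩ := h
  show vval z (fderiv ℝ f x) = g
  rw [hL.fderiv]; exact hv

lemma DD.congr {f : (Fin d → ℝ) → ℂ} {g g' : ℂ} (h : DD z f g x) (e : g = g') :
    DD z f g' x := e ▸ h

lemma dd_const (c : ℂ) : DD z (fun _ => c) 0 x :=
  ⟨0, hasFDerivAt_const c x, by simp [vval]⟩

lemma DD.add {f₁ f₂ : (Fin d → ℝ) → ℂ} {g₁ g₂ : ℂ}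
    (h₁ : DD z f₁ g₁ x) (h₂ : DD z f₂ g₂ x) :
    DD z (fun y => f₁ y + f₂ y) (g₁ + g₂) x := by
  obtain ⟨L₁, hL₁, hv₁⟩ := h₁
  obtain ⟨L₂, hL₂, hv₂⟩ := h₂
  exact ⟨L₁ + L₂, hL₁.add hL₂, by rw [vval_add, hv₁, hv₂]⟩

lemma DD.mul {f₁ f₂ : (Fin d → ℝ) → ℂ} {g₁ g₂ : ℂ}
    (h₁ : DD z f₁ g₁ x) (h₂ : DD z f₂ g₂ x) :
    DD z (fun y => f₁ y * f₂ y) (g₁ * f₂ x + f₁ x * g₂) x := by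
  obtain ⟨L₁, hL₁, hv₁⟩ := h₁
  obtain ⟨L₂, hL₂, hv₂⟩ := h₂
  refine ⟨f₁ x • L₂ + f₂ x • L₁, hL₁.mul hL₂, ?_⟩
  rw [vval_add, vval_smul, vval_smul, hv₁, hv₂]; ring

lemma DD.const_mul {f : (Fin d → ℝ) → ℂ} {g : ℂ} (h : DD z f g x) (c : ℂ) :
    DD z (fun y => c * f y) (c * g) x :=
  ((dd_const c).mul h).congr (by ring)

lemma DD.mul_const {f : (Fin d → ℝ) → ℂ} {g : ℂ} (h : DD z f g x) (c : ℂ) :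
    DD z (fun y => f y * c) (g * c) x :=
  (h.mul (dd_const c)).congr (by ring)

lemma DD.pow_succ' {f : (Fin d → ℝ) → ℂ} {g : ℂ} (h : DD z f g x) (m : ℕ) :
    DD z (fun y => f y ^ (m + 1)) (((m + 1 : ℕ) : ℂ) * f x ^ m * g) x := by
  induction m with
  | zero => simpa using h
  | succ m ih =>
      have h2 := ih.mul h
      have : (fun y => f y ^ (m + 1) * f y) = fun y => f y ^ (m + 1 + 1) := by
        funext y; rw [← pow_succ]
      rw [this] at h2
      exact h2.congr (by push_cast; ring)

lemma DD.pow {f : (Fin d → ℝ) → ℂ} {g : ℂ} (h : DD z f g x) (m : ℕ) :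
    DD z (fun y => f y ^ m) ((m : ℂ) * f x ^ (m - 1) * g) x := by
  cases m with
  | zero => exact (dd_const 1).congr (by simp)
  | succ m => exact (h.pow_succ' m).congr (by push_cast; ring_nf)

lemma DD.inv {f : (Fin d → ℝ) → ℂ} {g : ℂ} (h : DD z f g x) (hf : f x ≠ 0) :
    DD z (fun y => (f y)⁻¹) (-(g * ((f x)⁻¹) ^ 2)) x := by
  obtain ⟨L, hL, hv⟩ := h
  refine ⟨(-(f x ^ 2)⁻¹) • L, ?_, ?_⟩
  · exact (hasDerivAt_inv hf).comp_hasFDerivAt x hL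
  · rw [vval_smul, hv, ← inv_pow]; ring

lemma dd_sum {ι : Type*} (s : Finset ι) (f : ι → (Fin d → ℝ) → ℂ) (g : ι → ℂ)
    (h : ∀ i ∈ s, DD z (f i) (g i) x) :
    DD z (fun y => ∑ i ∈ s, f i y) (∑ i ∈ s, g i) x := by
  classical
  induction s using Finset.induction_on with
  | empty => simpa using dd_const 0
  | @insert a s' ha ih =>
      simp only [Finset.sum_insert ha]
      exact (h a (Finset.mem_insert_self a s')).add
        (ih fun i hi => h i (Finset.mem_insert_of_mem hi))

lemma dd_coord (i : Fin d) : DD z (fun y => ((y i : ℝ) : ℂ)) (z i) x := by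
  refine ⟨(ContinuousLinearMap.proj i : (Fin d → ℝ) →L[ℝ] ℝ).smulRight (1 : ℂ), ?_, ?_⟩
  · have h := ((ContinuousLinearMap.proj i : (Fin d → ℝ) →L[ℝ] ℝ).hasFDerivAt
      (x := x)).smul_const (1 : ℂ)
    have e : (fun y : Fin d → ℝ => (ContinuousLinearMap.proj i : (Fin d → ℝ) →L[ℝ] ℝ) y • (1 : ℂ))
        = fun y : Fin d → ℝ => ((y i : ℝ) : ℂ) := by
      funext y; simp [Complex.real_smul]
    rwa [e] at h
  · simp only [vval, ContinuousLinearMap.smulRight_apply, ContinuousLinearMap.proj_apply]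
    have : ∀ m : Fin d, (Pi.single m 1 : Fin d → ℝ) i • (1 : ℂ) = if i = m then 1 else 0 := by
      intro m
      by_cases hmi : i = m
      · subst hmi; simp
      · simp [Pi.single_apply, hmi]
    simp only [this, mul_ite, mul_one, mul_zero]
    simp

lemma dd_fA (w : Fin d → ℂ) :
    DD z (fun y => ∑ i, ((y i : ℝ) : ℂ) * w i) (∑ i, z i * w i) x := by
  exact dd_sum Finset.univ _ _ fun i _ => (dd_coord i).mul_const (w i)

lemma dd_fS :
    DD z (fun y => ∑ i, ((y i : ℝ) : ℂ) ^ 2) (2 * ∑ i, ((x i : ℝ) : ℂ) * z i) x := by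
  have h := dd_sum (z := z) (x := x) Finset.univ
    (fun i => fun y => ((y i : ℝ) : ℂ) ^ 2)
    (fun i => ((2 : ℕ) : ℂ) * ((x i : ℝ) : ℂ) ^ (2 - 1) * z i)
    (fun i _ => (dd_coord i).pow 2)
  refine h.congr ?_
  conv_rhs => rw [Finset.mul_sum]
  exact Finset.sum_congr rfl fun i _ => by norm_num; ring

lemma fS_ne (x : Fin d → ℝ) (hx : x ≠ 0) : (∑ i, ((x i : ℝ) : ℂ) ^ 2) ≠ 0 := by
  have h : (0 : ℝ) < ∑ i, x i ^ 2 := by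
    rcases Function.ne_iff.mp hx with ⟨i, hi⟩
    exact Finset.sum_pos' (fun j _ => sq_nonneg _)
      ⟨i, Finset.mem_univ i, pow_two_pos_of_ne_zero hi⟩
  have e : (∑ i, ((x i : ℝ) : ℂ) ^ 2) = ((∑ i, x i ^ 2 : ℝ) : ℂ) := by push_cast; rfl
  rw [e]
  exact_mod_cast h.ne'

lemma dd_term (z ξ : Fin d → ℂ) (hz : ∑ i, z i * z i = 0) {x : Fin d → ℝ} (hx : x ≠ 0)
    (K : ℂ) (a b : ℕ) :
    DD z (fun y => K * (∑ i, ((y i : ℝ) : ℂ) * ξ i) ^ a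
          * (-2 * ∑ i, ((y i : ℝ) : ℂ) * z i) ^ b
          * ((∑ i, ((y i : ℝ) : ℂ) ^ 2)⁻¹) ^ (b + 1))
      (K * ((a : ℕ) : ℂ) * (∑ i, z i * ξ i) * (∑ i, ((x i : ℝ) : ℂ) * ξ i) ^ (a - 1)
          * (-2 * ∑ i, ((x i : ℝ) : ℂ) * z i) ^ b
          * ((∑ i, ((x i : ℝ) : ℂ) ^ 2)⁻¹) ^ (b + 1)
        + K * ((b + 1 : ℕ) : ℂ) * (∑ i, ((x i : ℝ) : ℂ) * ξ i) ^ a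
          * (-2 * ∑ i, ((x i : ℝ) : ℂ) * z i) ^ (b + 1)
          * ((∑ i, ((x i : ℝ) : ℂ) ^ 2)⁻¹) ^ (b + 2)) x := by
  have hKA : DD z (fun y => K * (∑ i, ((y i : ℝ) : ℂ) * ξ i) ^ a)
      (K * (((a : ℕ) : ℂ) * (∑ i, ((x i : ℝ) : ℂ) * ξ i) ^ (a - 1) * (∑ i, z i * ξ i))) x :=
    ((dd_fA ξ).pow a).const_mul K
  have hBm : DD z (fun y => -2 * ∑ i, ((y i : ℝ) : ℂ) * z i) 0 x :=
    ((dd_fA z).const_mul (-2)).congr (by rw [hz]; ring)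
  have hBmb : DD z (fun y => (-2 * ∑ i, ((y i : ℝ) : ℂ) * z i) ^ b) 0 x :=
    (hBm.pow b).congr (by ring)
  have hSi : DD z (fun y => (∑ i, ((y i : ℝ) : ℂ) ^ 2)⁻¹)
      (-((2 * ∑ i, ((x i : ℝ) : ℂ) * z i) * ((∑ i, ((x i : ℝ) : ℂ) ^ 2)⁻¹) ^ 2)) x :=
    dd_fS.inv (fS_ne x hx)
  have h := (hKA.mul hBmb).mul (hSi.pow_succ' b)
  refine h.congr ?_
  push_cast
  ring

lemma key (z ξ : Fin d → ℂ) (hz : ∑ i, z i * z i = 0) (n : ℕ) :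
    ∀ (k : ℕ) (x : Fin d → ℝ), x ≠ 0 →
    (dirDeriv z)^[k]
        (fun y : Fin d → ℝ =>
          (∑ i, ((y i : ℝ) : ℂ) * ξ i) ^ n / (∑ i, ((y i : ℝ) : ℂ) ^ 2)) x
      = ∑ j ∈ range (k + 1),
          ((k.factorial * n.choose j : ℕ) : ℂ) * (∑ i, z i * ξ i) ^ j
            * (∑ i, ((x i : ℝ) : ℂ) * ξ i) ^ (n - j)
            * (-2 * ∑ i, ((x i : ℝ) : ℂ) * z i) ^ (k - j)
            * ((∑ i, ((x i : ℝ) : ℂ) ^ 2)⁻¹) ^ (k - j + 1) := by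
  intro k
  induction k with
  | zero =>
      intro x hx
      norm_num [Finset.sum_range_one, div_eq_mul_inv]
  | succ k ih =>
      intro x hx
      rw [Function.iterate_succ_apply']
      have hEq : (dirDeriv z)^[k]
          (fun y : Fin d → ℝ =>
            (∑ i, ((y i : ℝ) : ℂ) * ξ i) ^ n / (∑ i, ((y i : ℝ) : ℂ) ^ 2))
          =ᶠ[nhds x]
          (fun y : Fin d → ℝ => ∑ j ∈ range (k + 1),
            ((k.factorial * n.choose j : ℕ) : ℂ) * (∑ i, z i * ξ i) ^ j
              * (∑ i, ((y i : ℝ) : ℂ) * ξ i) ^ (n - j)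
              * (-2 * ∑ i, ((y i : ℝ) : ℂ) * z i) ^ (k - j)
              * ((∑ i, ((y i : ℝ) : ℂ) ^ 2)⁻¹) ^ (k - j + 1)) := by
        have hnhds : ∀ᶠ y in nhds x, y ≠ (0 : Fin d → ℝ) :=
          isOpen_compl_singleton.mem_nhds (by simpa using hx)
        filter_upwards [hnhds] with y hy using ih y hy
      have hstep : dirDeriv z ((dirDeriv z)^[k]
          (fun y : Fin d → ℝ =>
            (∑ i, ((y i : ℝ) : ℂ) * ξ i) ^ n / (∑ i, ((y i : ℝ) : ℂ) ^ 2))) x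
          = dirDeriv z (fun y : Fin d → ℝ => ∑ j ∈ range (k + 1),
            ((k.factorial * n.choose j : ℕ) : ℂ) * (∑ i, z i * ξ i) ^ j
              * (∑ i, ((y i : ℝ) : ℂ) * ξ i) ^ (n - j)
              * (-2 * ∑ i, ((y i : ℝ) : ℂ) * z i) ^ (k - j)
              * ((∑ i, ((y i : ℝ) : ℂ) ^ 2)⁻¹) ^ (k - j + 1)) x :=
        congrArg (vval z) (hEq.fderiv_eq (𝕜 := ℝ))
      rw [hstep]
      have hdd : DD z (fun y : Fin d → ℝ => ∑ j ∈ range (k + 1),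
            ((k.factorial * n.choose j : ℕ) : ℂ) * (∑ i, z i * ξ i) ^ j
              * (∑ i, ((y i : ℝ) : ℂ) * ξ i) ^ (n - j)
              * (-2 * ∑ i, ((y i : ℝ) : ℂ) * z i) ^ (k - j)
              * ((∑ i, ((y i : ℝ) : ℂ) ^ 2)⁻¹) ^ (k - j + 1))
          (∑ j ∈ range (k + 1),
            ((((k.factorial * n.choose j : ℕ) : ℂ) * (∑ i, z i * ξ i) ^ j)
                * ((n - j : ℕ) : ℂ) * (∑ i, z i * ξ i)
                * (∑ i, ((x i : ℝ) : ℂ) * ξ i) ^ (n - j - 1)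
                * (-2 * ∑ i, ((x i : ℝ) : ℂ) * z i) ^ (k - j)
                * ((∑ i, ((x i : ℝ) : ℂ) ^ 2)⁻¹) ^ (k - j + 1)
              + (((k.factorial * n.choose j : ℕ) : ℂ) * (∑ i, z i * ξ i) ^ j)
                * ((k - j + 1 : ℕ) : ℂ) * (∑ i, ((x i : ℝ) : ℂ) * ξ i) ^ (n - j)
                * (-2 * ∑ i, ((x i : ℝ) : ℂ) * z i) ^ (k - j + 1)
                * ((∑ i, ((x i : ℝ) : ℂ) ^ 2)⁻¹) ^ (k - j + 2))) x := by
        refine dd_sum (range (k + 1)) _ _ fun j hj => ?_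
        exact dd_term z ξ hz hx
          (((k.factorial * n.choose j : ℕ) : ℂ) * (∑ i, z i * ξ i) ^ j) (n - j) (k - j)
      rw [hdd.dirDeriv]
      -- now the combinatorial identity
      set Cv := ∑ i, z i * ξ i with hCv
      set A := ∑ i, ((x i : ℝ) : ℂ) * ξ i with hA
      set B := ∑ i, ((x i : ℝ) : ℂ) * z i with hB
      set Si := (∑ i, ((x i : ℝ) : ℂ) ^ 2)⁻¹ with hSidef
      rw [Finset.sum_add_distrib]
      have e1 : (∑ j ∈ range (k + 1),
            (((k.factorial * n.choose j : ℕ) : ℂ) * Cv ^ j)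
              * ((n - j : ℕ) : ℂ) * Cv * A ^ (n - j - 1)
              * (-2 * B) ^ (k - j) * Si ^ (k - j + 1))
          = ∑ j ∈ range (k + 2),
            ((k.factorial * (j * n.choose j) : ℕ) : ℂ)
              * (Cv ^ j * A ^ (n - j) * (-2 * B) ^ (k + 1 - j) * Si ^ (k + 1 - j + 1)) := by
        conv_rhs => rw [Finset.sum_range_succ']
        simp only [Nat.mul_zero, Nat.zero_mul, Nat.cast_zero, zero_mul, mul_zero, add_zero]
        refine Finset.sum_congr rfl fun j hj => ?_
        have hjk : j ≤ k := by simpa [Nat.lt_succ_iff] using hj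
        have c1 : (j + 1) * n.choose (j + 1) = n.choose j * (n - j) := by
          rw [mul_comm]; exact Nat.choose_succ_right_eq n j
        have e1' : n - (j + 1) = n - j - 1 := by omega
        have e2' : k + 1 - (j + 1) = k - j := by omega
        rw [e1', e2', c1]
        push_cast
        ring
      have e2 : (∑ j ∈ range (k + 1),
            (((k.factorial * n.choose j : ℕ) : ℂ) * Cv ^ j)
              * ((k - j + 1 : ℕ) : ℂ) * A ^ (n - j)
              * (-2 * B) ^ (k - j + 1) * Si ^ (k - j + 2))
          = ∑ j ∈ range (k + 2),
            ((k.factorial * ((k + 1 - j) * n.choose j) : ℕ) : ℂ)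
              * (Cv ^ j * A ^ (n - j) * (-2 * B) ^ (k + 1 - j) * Si ^ (k + 1 - j + 1)) := by
        conv_rhs => rw [Finset.sum_range_succ]
        simp only [Nat.sub_self, Nat.zero_mul, Nat.mul_zero, Nat.cast_zero, zero_mul, mul_zero,
          add_zero]
        refine Finset.sum_congr rfl fun j hj => ?_
        have hjk : j ≤ k := by simpa [Nat.lt_succ_iff] using hj
        have e2' : k + 1 - j = k - j + 1 := by omega
        rw [e2']
        push_cast
        ring
      rw [e1, e2, ← Finset.sum_add_distrib]
      refine Finset.sum_congr rfl fun j hj => ?_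
      have hjk : j ≤ k + 1 := by simpa [Nat.lt_succ_iff] using hj
      have hco : k.factorial * (j * n.choose j) + k.factorial * ((k + 1 - j) * n.choose j)
          = (k + 1).factorial * n.choose j := by
        have h1 : j + (k + 1 - j) = k + 1 := by omega
        calc k.factorial * (j * n.choose j) + k.factorial * ((k + 1 - j) * n.choose j)
            = k.factorial * ((j + (k + 1 - j)) * n.choose j) := by ring
          _ = (k + 1).factorial * n.choose j := by rw [h1, Nat.factorial_succ]; ring
      rw [← hco]
      push_cast
      ring

end Stmt13Aux

open Stmt13Aux in
/-- Lemma F.1 of the paper (contracted with an auxiliary vector `ξ`): for a complex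
null vector `z`, `D_z^n [(x·ξ)^n/|x|²] = (−1)^n n! (v(x)·ξ)^n/|x|²` where
`v(x) = (2(x·z)/|x|²) x − z`. -/
theorem stmt13 (d : ℕ) (hd : 1 ≤ d) (z ξ : Fin d → ℂ) (hz : ∑ i, z i * z i = 0)
    (n : ℕ) (x : Fin d → ℝ) (hx : x ≠ 0) :
    (dirDeriv z)^[n]
        (fun y : Fin d → ℝ => (∑ i, (y i : ℂ) * ξ i) ^ n / (∑ i, (y i : ℂ) ^ 2)) x
      = (-1) ^ n * (Nat.factorial n : ℂ)
          * (∑ i, ((2 * (∑ j, (x j : ℂ) * z j) / (∑ j, (x j : ℂ) ^ 2)) * (x i : ℂ)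
              - z i) * ξ i) ^ n
          / (∑ i, (x i : ℂ) ^ 2) := by
  rw [Stmt13Aux.key z ξ hz n n x hx]
  set Cv := ∑ i, z i * ξ i with hCv
  set A := ∑ i, ((x i : ℝ) : ℂ) * ξ i with hA
  set B := ∑ i, ((x i : ℝ) : ℂ) * z i with hB
  set S := ∑ i, ((x i : ℝ) : ℂ) ^ 2 with hSdef
  have hS : S ≠ 0 := Stmt13Aux.fS_ne x hx
  have hW : ∑ i, (2 * B / S * ((x i : ℝ) : ℂ) - z i) * ξ i = 2 * B / S * A - Cv := by
    calc ∑ i, (2 * B / S * ((x i : ℝ) : ℂ) - z i) * ξ i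
        = ∑ i, (2 * B / S * (((x i : ℝ) : ℂ) * ξ i) - z i * ξ i) :=
          Finset.sum_congr rfl fun i _ => by ring
      _ = 2 * B / S * A - Cv := by
          rw [Finset.sum_sub_distrib, ← Finset.mul_sum]
  rw [hW]
  have hbase : Cv + A * (-2 * B) * S⁻¹ = -(2 * B / S * A - Cv) := by
    rw [div_eq_mul_inv]; ring
  have hrhs : (-1 : ℂ) ^ n * (Nat.factorial n : ℂ) * (2 * B / S * A - Cv) ^ n / S
      = (Nat.factorial n : ℂ) * S⁻¹ * (Cv + A * (-2 * B) * S⁻¹) ^ n := by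
    rw [hbase, neg_pow (2 * B / S * A - Cv), div_eq_mul_inv]; ring
  rw [hrhs, add_pow Cv (A * (-2 * B) * S⁻¹) n]
  conv_rhs => rw [Finset.mul_sum]
  refine Finset.sum_congr rfl fun j hj => ?_
  push_cast
  ring
end

section
/- Let d ≥ 1, let z ∈ ℂ^d, let k ≥ 0 and n ≥ 1 be integers, let P : ℝ^d → ℂ be a polynomial function of degree at most k, and let g : U → ℂ be infinitely differentiable on an open set U ⊆ ℝ^d. Writing D_z f = Σ_{i=1}^d z_i ∂f/∂x_i, one has on U: P(x) · (D_z^{n+k} g)(x) = D_z^n [ Σ_{ℓ=0}^{k} (−1)^ℓ · binomial(n+ℓ−1, ℓ) · (D_z^ℓ P)(x) · (D_z^{k−ℓ} g)(x) ]. -/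
open Complex

namespace Stmt14Aux

open MvPolynomial

variable {d : ℕ} (z : Fin d → ℂ)

/-- evaluation of a complex mv-polynomial at a real point -/
noncomputable def evalFn (p : MvPolynomial (Fin d) ℂ) : (Fin d → ℝ) → ℂ :=
  fun x => MvPolynomial.eval (fun i => (x i : ℂ)) p

/-- the polynomial directional derivative -/
noncomputable def dpoly (p : MvPolynomial (Fin d) ℂ) : MvPolynomial (Fin d) ℂ :=
  ∑ i, MvPolynomial.C (z i) * MvPolynomial.pderiv i p

lemma contDiff_coord (i : Fin d) : ContDiff ℝ (⊤ : ℕ∞) (fun x : Fin d → ℝ => ((x i : ℝ) : ℂ)) := by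
  exact Complex.ofRealCLM.contDiff.comp (ContinuousLinearMap.proj (R := ℝ) (φ := fun _ : Fin d => ℝ) i).contDiff

lemma contDiff_evalFn (p : MvPolynomial (Fin d) ℂ) : ContDiff ℝ (⊤ : ℕ∞) (evalFn p) := by
  induction p using MvPolynomial.induction_on with
  | C a =>
      have h : evalFn (d := d) (MvPolynomial.C a) = fun _ => a := by
        funext x; simp [evalFn]
      rw [h]; exact contDiff_const
  | add p q hp hq =>
      have h : evalFn (p + q) = fun x => evalFn p x + evalFn q x := by
        funext x; simp [evalFn]
      rw [h]; exact hp.add hq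
  | mul_X p i hp =>
      have h : evalFn (p * MvPolynomial.X i) = fun x => evalFn p x * ((x i : ℝ) : ℂ) := by
        funext x; simp [evalFn]
      rw [h]; exact hp.mul (contDiff_coord i)

lemma dirDeriv_const (a : ℂ) : dirDeriv z (fun _ => a) = fun _ => 0 := by
  funext x; simp [dirDeriv]

lemma dirDeriv_add {f g : (Fin d → ℝ) → ℂ} {x} (hf : DifferentiableAt ℝ f x)
    (hg : DifferentiableAt ℝ g x) :
    dirDeriv z (fun y => f y + g y) x = dirDeriv z f x + dirDeriv z g x := by
  simp [dirDeriv, fderiv_fun_add hf hg, mul_add, Finset.sum_add_distrib]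

lemma dirDeriv_const_mul {f : (Fin d → ℝ) → ℂ} {x} (hf : DifferentiableAt ℝ f x) (c : ℂ) :
    dirDeriv z (fun y => c * f y) x = c * dirDeriv z f x := by
  simp only [dirDeriv, fderiv_const_mul hf c, ContinuousLinearMap.smul_apply, smul_eq_mul,
    Finset.mul_sum]
  exact Finset.sum_congr rfl fun i _ => by ring

lemma dirDeriv_mul {f g : (Fin d → ℝ) → ℂ} {x} (hf : DifferentiableAt ℝ f x)
    (hg : DifferentiableAt ℝ g x) :
    dirDeriv z (fun y => f y * g y) x = dirDeriv z f x * g x + f x * dirDeriv z g x := by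
  simp only [dirDeriv, fderiv_fun_mul hf hg, ContinuousLinearMap.add_apply,
    ContinuousLinearMap.smul_apply, smul_eq_mul, mul_add, Finset.sum_add_distrib,
    Finset.sum_mul, Finset.mul_sum]
  rw [add_comm]
  congr 1
  · exact Finset.sum_congr rfl fun i _ => by ring
  · exact Finset.sum_congr rfl fun i _ => by ring

lemma dirDeriv_sum {ι : Type*} {s : Finset ι} {F : ι → (Fin d → ℝ) → ℂ} {x}
    (h : ∀ i ∈ s, DifferentiableAt ℝ (F i) x) :
    dirDeriv z (fun y => ∑ i ∈ s, F i y) x = ∑ i ∈ s, dirDeriv z (F i) x := by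
  simp only [dirDeriv, fderiv_fun_sum h, ContinuousLinearMap.sum_apply, Finset.mul_sum]
  exact Finset.sum_comm

lemma dirDeriv_coord (i : Fin d) :
    dirDeriv z (fun x : Fin d → ℝ => ((x i : ℝ) : ℂ)) = fun _ => z i := by
  funext x
  have h : (fun x : Fin d → ℝ => ((x i : ℝ) : ℂ))
      = ⇑(Complex.ofRealCLM.comp (ContinuousLinearMap.proj (R := ℝ) (φ := fun _ : Fin d => ℝ) i)) := rfl
  simp only [dirDeriv, h, ContinuousLinearMap.fderiv]
  have h2 : ∀ j : Fin d, z j * (Complex.ofRealCLM.comp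
      (ContinuousLinearMap.proj (R := ℝ) (φ := fun _ : Fin d => ℝ) i)) (Pi.single j 1)
      = if i = j then z j else 0 := by
    intro j
    by_cases hij : i = j <;> simp [Pi.single_apply, hij]
  rw [Finset.sum_congr rfl fun j _ => h2 j, Finset.sum_ite_eq]
  simp

lemma dirDeriv_congr_nhds {f g : (Fin d → ℝ) → ℂ} {x} (h : f =ᶠ[nhds x] g) :
    dirDeriv z f x = dirDeriv z g x := by
  simp [dirDeriv, h.fderiv_eq]

lemma iterate_congr {U : Set (Fin d → ℝ)} (hU : IsOpen U) {f g : (Fin d → ℝ) → ℂ}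
    (h : Set.EqOn f g U) (m : ℕ) :
    Set.EqOn ((dirDeriv z)^[m] f) ((dirDeriv z)^[m] g) U := by
  induction m generalizing f g with
  | zero => simpa using h
  | succ m ih =>
      intro y hy
      rw [Function.iterate_succ_apply, Function.iterate_succ_apply]
      exact ih (fun w hw =>
        dirDeriv_congr_nhds z (Filter.eventuallyEq_of_mem (hU.mem_nhds hw) h)) hy

lemma contDiffOn_dirDeriv {U : Set (Fin d → ℝ)} (hU : IsOpen U) {f : (Fin d → ℝ) → ℂ}
    (hf : ContDiffOn ℝ (⊤ : ℕ∞) f U) : ContDiffOn ℝ (⊤ : ℕ∞) (dirDeriv z f) U := by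
  have hfd : ContDiffOn ℝ (⊤ : ℕ∞) (fderiv ℝ f) U := hf.fderiv_of_isOpen hU (by norm_num)
  have : ContDiffOn ℝ (⊤ : ℕ∞) (fun x => ∑ i, z i * fderiv ℝ f x (Pi.single i 1)) U := by
    apply ContDiffOn.sum
    intro i _
    exact contDiffOn_const.mul (hfd.clm_apply contDiffOn_const)
  exact this

lemma contDiffOn_iter {U : Set (Fin d → ℝ)} (hU : IsOpen U) {f : (Fin d → ℝ) → ℂ}
    (hf : ContDiffOn ℝ (⊤ : ℕ∞) f U) (m : ℕ) : ContDiffOn ℝ (⊤ : ℕ∞) ((dirDeriv z)^[m] f) U := by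
  induction m with
  | zero => simpa using hf
  | succ m ih => rw [Function.iterate_succ_apply']; exact contDiffOn_dirDeriv z hU ih

lemma diffAt_of_contDiffOn {U : Set (Fin d → ℝ)} (hU : IsOpen U) {f : (Fin d → ℝ) → ℂ}
    (hf : ContDiffOn ℝ (⊤ : ℕ∞) f U) {y} (hy : y ∈ U) : DifferentiableAt ℝ f y :=
  (hf.contDiffAt (hU.mem_nhds hy)).differentiableAt (by simp)

lemma dpoly_C (a : ℂ) : dpoly z (MvPolynomial.C a) = 0 := by
  simp [dpoly]

lemma dpoly_add (p q : MvPolynomial (Fin d) ℂ) :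
    dpoly z (p + q) = dpoly z p + dpoly z q := by
  simp [dpoly, map_add, mul_add, Finset.sum_add_distrib]

lemma dpoly_mul_X (p : MvPolynomial (Fin d) ℂ) (i : Fin d) :
    dpoly z (p * MvPolynomial.X i) = dpoly z p * MvPolynomial.X i + MvPolynomial.C (z i) * p := by
  classical
  simp only [dpoly, pderiv_mul, pderiv_X, mul_add, Finset.sum_add_distrib, Finset.sum_mul]
  congr 1
  · exact Finset.sum_congr rfl fun j _ => by ring
  · rw [Finset.sum_eq_single i]
    · simp [mul_comm]
    · intro j _ hji
      simp [Pi.single_eq_of_ne hji.symm]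
    · intro h; exact absurd (Finset.mem_univ i) h

lemma dirDeriv_evalFn (p : MvPolynomial (Fin d) ℂ) :
    dirDeriv z (evalFn p) = evalFn (dpoly z p) := by
  induction p using MvPolynomial.induction_on with
  | C a =>
      have h : evalFn (d := d) (MvPolynomial.C a) = fun _ => a := by funext x; simp [evalFn]
      rw [h, dpoly_C, dirDeriv_const]
      funext x; simp [evalFn]
  | add p q hp hq =>
      have h : evalFn (p + q) = fun x => evalFn p x + evalFn q x := by funext x; simp [evalFn]
      rw [h, dpoly_add]
      funext x
      rw [dirDeriv_add z ((contDiff_evalFn p).differentiable (by simp) x)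
        ((contDiff_evalFn q).differentiable (by simp) x), hp, hq]
      simp [evalFn]
  | mul_X p i hp =>
      have h : evalFn (p * MvPolynomial.X i) = fun x => evalFn p x * ((x i : ℝ) : ℂ) := by
        funext x; simp [evalFn]
      rw [h, dpoly_mul_X]
      funext x
      have hdc : DifferentiableAt ℝ (fun x : Fin d → ℝ => ((x i : ℝ) : ℂ)) x :=
        (Complex.ofRealCLM.comp (ContinuousLinearMap.proj (R := ℝ)
          (φ := fun _ : Fin d => ℝ) i)).differentiableAt
      rw [dirDeriv_mul z ((contDiff_evalFn p).differentiable (by simp) x) hdc, hp]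
      have hc := congrFun (dirDeriv_coord z i) x
      rw [hc]
      simp [evalFn]
      ring

lemma iterate_evalFn (p : MvPolynomial (Fin d) ℂ) (m : ℕ) :
    (dirDeriv z)^[m] (evalFn p) = evalFn ((dpoly z)^[m] p) := by
  induction m with
  | zero => rfl
  | succ m ih =>
      rw [Function.iterate_succ_apply', ih, dirDeriv_evalFn, ← Function.iterate_succ_apply' (dpoly z) m p]

lemma td_pderiv (i : Fin d) (p : MvPolynomial (Fin d) ℂ) (m : ℕ) (h : p.totalDegree ≤ m + 1) :
    (MvPolynomial.pderiv i p).totalDegree ≤ m := by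
  classical
  conv_lhs => rw [← support_sum_monomial_coeff p]
  rw [map_sum]
  refine le_trans (totalDegree_finset_sum _ _) (Finset.sup_le fun s hs => ?_)
  rw [pderiv_monomial]
  by_cases h0 : s i = 0
  · simp [h0]
  · refine le_trans (totalDegree_monomial_le _ _) ?_
    have hle : Finsupp.single i 1 ≤ s := by
      rw [Finsupp.single_le_iff]; omega
    have hadd : s - Finsupp.single i 1 + Finsupp.single i 1 = s := tsub_add_cancel_of_le hle
    have hsum : (s - Finsupp.single i 1).sum (fun _ => (id : ℕ → ℕ)) + 1
        = s.sum (fun _ e => e) := by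
      conv_rhs => rw [← hadd]
      rw [Finsupp.sum_add_index' (fun _ => rfl) (fun _ _ _ => rfl)]
      rw [Finsupp.sum_single_index rfl]
      rfl
    have hs2 : s.sum (fun _ e => e) ≤ m + 1 := le_trans (le_totalDegree hs) h
    omega

lemma td_dpoly (p : MvPolynomial (Fin d) ℂ) (m : ℕ) (h : p.totalDegree ≤ m + 1) :
    (dpoly z p).totalDegree ≤ m := by
  refine le_trans (totalDegree_finset_sum _ _) (Finset.sup_le fun i _ => ?_)
  refine le_trans (totalDegree_mul _ _) ?_
  simpa [totalDegree_C] using td_pderiv i p m h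

lemma dpoly_iterate_zero (k : ℕ) (p : MvPolynomial (Fin d) ℂ) (h : p.totalDegree ≤ k) :
    (dpoly z)^[k + 1] p = 0 := by
  induction k generalizing p with
  | zero =>
      have hp : p = MvPolynomial.C (p.coeff 0) := by
        ext m
        by_cases hm : m = 0
        · simp [hm]
        · rw [MvPolynomial.coeff_C, if_neg (Ne.symm hm)]
          by_contra hc
          have hmem : m ∈ p.support := by
            simp [MvPolynomial.mem_support_iff, hc]
          have := le_totalDegree hmem
          have hz : m.sum (fun _ e => e) = 0 := by omega
          apply hm
          ext j
          by_cases hj : j ∈ m.support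
          · exact absurd hz (by
              have : 0 < m.sum fun _ e => e := by
                refine Finset.sum_pos' (fun _ _ => Nat.zero_le _) ⟨j, hj, ?_⟩
                simpa [Finsupp.mem_support_iff, Nat.pos_iff_ne_zero] using hj
              omega)
          · simpa [Finsupp.mem_support_iff] using hj
      rw [Function.iterate_one, hp, dpoly_C]
  | succ k ih =>
      rw [Function.iterate_succ_apply]
      exact ih _ (td_dpoly z p k h)

lemma combin (n k : ℕ) (A B : ℕ → ℂ) (hA : A (k + 1) = 0) :
    ∑ ℓ ∈ Finset.range (k + 1),
      ((-1) ^ ℓ * (Nat.choose (n + ℓ) ℓ : ℂ) * A (ℓ + 1) * B (k - ℓ)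
        + (-1) ^ ℓ * (Nat.choose (n + ℓ) ℓ : ℂ) * A ℓ * B (k - ℓ + 1))
    = ∑ ℓ ∈ Finset.range (k + 1),
        (-1) ^ ℓ * (Nat.choose (n + ℓ - 1) ℓ : ℂ) * A ℓ * B (k - ℓ + 1) := by
  rw [Finset.sum_add_distrib]
  rw [Finset.sum_range_succ (fun ℓ => (-1) ^ ℓ * (Nat.choose (n + ℓ) ℓ : ℂ) * A (ℓ + 1) * B (k - ℓ))]
  rw [Finset.sum_range_succ' (fun ℓ => (-1) ^ ℓ * (Nat.choose (n + ℓ) ℓ : ℂ) * A ℓ * B (k - ℓ + 1))]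
  rw [Finset.sum_range_succ' (fun ℓ => (-1) ^ ℓ * (Nat.choose (n + ℓ - 1) ℓ : ℂ) * A ℓ * B (k - ℓ + 1))]
  simp only [hA, mul_zero, zero_mul, add_zero, pow_zero, one_mul, Nat.choose_zero_right,
    Nat.cast_one, Nat.sub_zero, Nat.add_zero]
  rw [← add_assoc, ← Finset.sum_add_distrib]
  congr 1
  refine Finset.sum_congr rfl fun ℓ hℓ => ?_
  have hℓk : ℓ < k := Finset.mem_range.mp hℓ
  have h1 : k - (ℓ + 1) + 1 = k - ℓ := by omega
  have h2 : n + (ℓ + 1) - 1 = n + ℓ := by omega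
  have h3 : n + (ℓ + 1) = (n + ℓ) + 1 := by omega
  rw [h1, h2, h3]
  have hp : (Nat.choose (n + ℓ + 1) (ℓ + 1) : ℂ)
      = (Nat.choose (n + ℓ) ℓ : ℂ) + (Nat.choose (n + ℓ) (ℓ + 1) : ℂ) := by
    have := Nat.choose_succ_succ (n + ℓ) ℓ
    push_cast [this]
    ring
  rw [pow_succ]
  rw [hp]
  ring

end Stmt14Aux

/-- Lemma F.2 of the paper: moving a polynomial factor of degree at most `k` across
the `(n+k)`-th power of the directional derivative `D_z`:
`P · D_z^{n+k} g = D_z^n [ Σ_{ℓ=0}^{k} (−1)^ℓ C(n+ℓ−1,ℓ) (D_z^ℓ P)(D_z^{k−ℓ} g) ]`. -/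
theorem stmt14 (d : ℕ) (hd : 1 ≤ d) (z : Fin d → ℂ) (k n : ℕ) (hn : 1 ≤ n)
    (p : MvPolynomial (Fin d) ℂ) (hp : p.totalDegree ≤ k)
    (P : (Fin d → ℝ) → ℂ)
    (hP : ∀ x : Fin d → ℝ, P x = MvPolynomial.eval (fun i => (x i : ℂ)) p)
    (U : Set (Fin d → ℝ)) (hU : IsOpen U)
    (g : (Fin d → ℝ) → ℂ) (hg : ContDiffOn ℝ (⊤ : ℕ∞) g U)
    (x : Fin d → ℝ) (hx : x ∈ U) :
    P x * (dirDeriv z)^[n + k] g x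
      = (dirDeriv z)^[n]
          (fun y : Fin d → ℝ => ∑ ℓ ∈ Finset.range (k + 1),
            (-1) ^ ℓ * (Nat.choose (n + ℓ - 1) ℓ : ℂ)
              * (dirDeriv z)^[ℓ] P y * (dirDeriv z)^[k - ℓ] g y) x := by
  classical
  have hPe : P = Stmt14Aux.evalFn p := funext hP
  subst hPe
  have hPsm : ∀ m, ContDiff ℝ (⊤ : ℕ∞) ((dirDeriv z)^[m] (Stmt14Aux.evalFn p)) := by
    intro m
    rw [Stmt14Aux.iterate_evalFn]
    exact Stmt14Aux.contDiff_evalFn _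
  have hPzero : (dirDeriv z)^[k + 1] (Stmt14Aux.evalFn p) = fun _ => 0 := by
    rw [Stmt14Aux.iterate_evalFn, Stmt14Aux.dpoly_iterate_zero z k p hp]
    funext x; simp [Stmt14Aux.evalFn]
  have key : ∀ m : ℕ, ∀ g : (Fin d → ℝ) → ℂ, ContDiffOn ℝ (⊤ : ℕ∞) g U → ∀ x ∈ U,
      (dirDeriv z)^[m] (fun y => ∑ ℓ ∈ Finset.range (k + 1),
        (-1) ^ ℓ * (Nat.choose (m + ℓ - 1) ℓ : ℂ) * (dirDeriv z)^[ℓ] (Stmt14Aux.evalFn p) y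
          * (dirDeriv z)^[k - ℓ] g y) x
      = Stmt14Aux.evalFn p x * (dirDeriv z)^[m + k] g x := by
    intro m
    induction m with
    | zero =>
        intro g hg x hx
        rw [Function.iterate_zero_apply, zero_add]
        rw [Finset.sum_eq_single_of_mem 0 (Finset.mem_range.mpr (Nat.succ_pos k))]
        · simp
        · intro ℓ _ hℓ0
          have hcz : Nat.choose (ℓ - 1) ℓ = 0 := Nat.choose_eq_zero_of_lt (by omega)
          simp [hcz]
    | succ m ihm =>
        intro g hg x hx
        have hgDi : ∀ j, ContDiffOn ℝ (⊤ : ℕ∞) ((dirDeriv z)^[j] g) U :=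
          fun j => Stmt14Aux.contDiffOn_iter z hU hg j
        have hEq : Set.EqOn
            (dirDeriv z (fun y => ∑ ℓ ∈ Finset.range (k + 1),
              (-1) ^ ℓ * (Nat.choose (m + 1 + ℓ - 1) ℓ : ℂ)
                * (dirDeriv z)^[ℓ] (Stmt14Aux.evalFn p) y * (dirDeriv z)^[k - ℓ] g y))
            (fun y => ∑ ℓ ∈ Finset.range (k + 1),
              (-1) ^ ℓ * (Nat.choose (m + ℓ - 1) ℓ : ℂ)
                * (dirDeriv z)^[ℓ] (Stmt14Aux.evalFn p) y
                * (dirDeriv z)^[k - ℓ] (dirDeriv z g) y) U := by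
          intro y hy
          have hdiffP : ∀ j, DifferentiableAt ℝ ((dirDeriv z)^[j] (Stmt14Aux.evalFn p)) y :=
            fun j => (hPsm j).differentiable (by simp) y
          have hdiffg : ∀ j, DifferentiableAt ℝ ((dirDeriv z)^[j] g) y :=
            fun j => Stmt14Aux.diffAt_of_contDiffOn hU (hgDi j) hy
          have hterm : ∀ ℓ ∈ Finset.range (k + 1),
              dirDeriv z (fun w => (-1) ^ ℓ * (Nat.choose (m + 1 + ℓ - 1) ℓ : ℂ)
                * (dirDeriv z)^[ℓ] (Stmt14Aux.evalFn p) w * (dirDeriv z)^[k - ℓ] g w) y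
              = (-1) ^ ℓ * (Nat.choose (m + 1 + ℓ - 1) ℓ : ℂ)
                  * (dirDeriv z)^[ℓ + 1] (Stmt14Aux.evalFn p) y * (dirDeriv z)^[k - ℓ] g y
                + (-1) ^ ℓ * (Nat.choose (m + 1 + ℓ - 1) ℓ : ℂ)
                  * (dirDeriv z)^[ℓ] (Stmt14Aux.evalFn p) y * (dirDeriv z)^[k - ℓ + 1] g y := by
            intro ℓ _
            rw [Stmt14Aux.dirDeriv_mul z ((hdiffP ℓ).const_mul _) (hdiffg (k - ℓ))]
            rw [Stmt14Aux.dirDeriv_const_mul z (hdiffP ℓ)]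
            rw [← Function.iterate_succ_apply' (dirDeriv z) ℓ (Stmt14Aux.evalFn p)]
            rw [← Function.iterate_succ_apply' (dirDeriv z) (k - ℓ) g]
          rw [Stmt14Aux.dirDeriv_sum z
            (F := fun ℓ w => (-1) ^ ℓ * (Nat.choose (m + 1 + ℓ - 1) ℓ : ℂ)
              * (dirDeriv z)^[ℓ] (Stmt14Aux.evalFn p) w * (dirDeriv z)^[k - ℓ] g w)
            (fun ℓ _ => ((hdiffP ℓ).const_mul _).mul (hdiffg (k - ℓ)))]
          rw [Finset.sum_congr rfl hterm]
          have hidx : ∀ ℓ : ℕ, m + 1 + ℓ - 1 = m + ℓ := fun ℓ => by omega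
          simp only [hidx, ← Function.iterate_succ_apply]
          exact Stmt14Aux.combin m k
            (fun j => (dirDeriv z)^[j] (Stmt14Aux.evalFn p) y)
            (fun j => (dirDeriv z)^[j] g y) (congrFun hPzero y)
        rw [Function.iterate_succ_apply]
        rw [Stmt14Aux.iterate_congr z hU hEq m hx]
        rw [ihm (dirDeriv z g) (Stmt14Aux.contDiffOn_dirDeriv z hU hg) x hx]
        rw [← Function.iterate_succ_apply (dirDeriv z) (m + k) g]
        have hidx2 : (m + k).succ = m + 1 + k := by omega
        rw [hidx2]
  exact (key n g hg x hx).symm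
end

section
/- For all integers d ≥ 3 and n ≥ s ≥ 1 the following identity of rational numbers holds: ( (n−s+1)(n+s+d−1)(2n+d)(2s+d−2) · (n+d−2)! · (s+d−3)! ) / ( (n+1)! · s! · d! · (d−2)! ) = [ (2s+d−2)(s+d−3)!/(s!(d−2)!) ] · [ (2n+d)(n+d−1)!/(n!·d!) ] − [ (2n+d)(n+d−2)!/((n+1)!(d−2)!) ] · [ (2s+d−2)(s+d−2)!/((s−1)!·d!) ]. -/
/-- The dimension identity `D^{d+2}_{n,s} = D^d_s D^{d+2}_n − D^d_{n+1} D^{d+2}_{s−1}`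
for dimensions of SO(d) and SO(d+2) representations, as an identity of rational
numbers, for integers `d ≥ 3` and `n ≥ s ≥ 1`. -/
theorem stmt16 (d n s : ℕ) (hd : 3 ≤ d) (hs : 1 ≤ s) (hns : s ≤ n) :
    (((n - s + 1) * (n + s + d - 1) * (2 * n + d) * (2 * s + d - 2)
        * Nat.factorial (n + d - 2) * Nat.factorial (s + d - 3) : ℕ) : ℚ)
      / ((Nat.factorial (n + 1) * Nat.factorial s * Nat.factorial d
        * Nat.factorial (d - 2) : ℕ) : ℚ)
    = (((2 * s + d - 2) * Nat.factorial (s + d - 3) : ℕ) : ℚ)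
        / ((Nat.factorial s * Nat.factorial (d - 2) : ℕ) : ℚ)
      * ((((2 * n + d) * Nat.factorial (n + d - 1) : ℕ) : ℚ)
        / ((Nat.factorial n * Nat.factorial d : ℕ) : ℚ))
    - (((2 * n + d) * Nat.factorial (n + d - 2) : ℕ) : ℚ)
        / ((Nat.factorial (n + 1) * Nat.factorial (d - 2) : ℕ) : ℚ)
      * ((((2 * s + d - 2) * Nat.factorial (s + d - 2) : ℕ) : ℚ)
        / ((Nat.factorial (s - 1) * Nat.factorial d : ℕ) : ℚ)) := by
  obtain ⟨e, rfl⟩ : ∃ e, d = e + 3 := ⟨d - 3, by omega⟩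
  obtain ⟨t, rfl⟩ : ∃ t, s = t + 1 := ⟨s - 1, by omega⟩
  obtain ⟨m, rfl⟩ : ∃ m, n = m + t + 1 := ⟨n - t - 1, by omega⟩
  have h1 : m + t + 1 - (t + 1) + 1 = m + 1 := by omega
  have h2 : m + t + 1 + (t + 1) + (e + 3) - 1 = m + 2 * t + e + 4 := by omega
  have h3 : 2 * (m + t + 1) + (e + 3) = 2 * m + 2 * t + e + 5 := by omega
  have h4 : 2 * (t + 1) + (e + 3) - 2 = 2 * t + e + 3 := by omega
  have h5 : m + t + 1 + (e + 3) - 2 = m + t + e + 2 := by omega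
  have h6 : t + 1 + (e + 3) - 3 = t + e + 1 := by omega
  have h7 : e + 3 - 2 = e + 1 := by omega
  have h8 : m + t + 1 + (e + 3) - 1 = (m + t + e + 2) + 1 := by omega
  have h9 : t + 1 + (e + 3) - 2 = (t + e + 1) + 1 := by omega
  have h10 : t + 1 - 1 = t := by omega
  have h11 : m + t + 1 + 1 = (m + t + 1) + 1 := by omega
  rw [h1, h2, h3, h4, h5, h6, h7, h8, h9, h10, h11]
  rw [show e + 3 = (e + 1) + 1 + 1 from rfl]
  rw [Nat.factorial_succ (m + t + e + 2), Nat.factorial_succ (t + e + 1),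
    Nat.factorial_succ (m + t + 1), Nat.factorial_succ (t),
    Nat.factorial_succ ((e + 1) + 1), Nat.factorial_succ (e + 1)]
  have hF1 : ((Nat.factorial (m + t + e + 2) : ℕ) : ℚ) ≠ 0 := by
    exact_mod_cast Nat.factorial_ne_zero _
  have hF2 : ((Nat.factorial (t + e + 1) : ℕ) : ℚ) ≠ 0 := by
    exact_mod_cast Nat.factorial_ne_zero _
  have hF3 : ((Nat.factorial (m + t + 1) : ℕ) : ℚ) ≠ 0 := by
    exact_mod_cast Nat.factorial_ne_zero _
  have hF4 : ((Nat.factorial t : ℕ) : ℚ) ≠ 0 := by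
    exact_mod_cast Nat.factorial_ne_zero _
  have hF5 : ((Nat.factorial (e + 1) : ℕ) : ℚ) ≠ 0 := by
    exact_mod_cast Nat.factorial_ne_zero _
  push_cast
  field_simp
  ring
end

section
/- Let N ≥ 1 and n ≥ N be integers and let x ∈ ℝ. Then the improper integral ∫_x^∞ (y−x)^{2N−2} · (1−iy)^{n−N} · (1+iy)^{−(n+N)} dy converges and equals i·(−1)^N · (2N−2)! · ( (n−N)! / (N+n−1)! ) · [ 2^{1−2N} · (1−ix)^n (1+ix)^{−n} (1+x²)^{N−1} + ( (−1)^{n+N} / 2 ) · Σ_{k=0}^{2N−2} binomial(n+N−1, 2N−2−k) · ( (1+ix)/(−2) )^k ]. -/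
/-!
Write `w = 1 + i y`, so that `1 - i y = 2 - w` and `y - x = -i (w - (1 + i x))`. Expanding
`(2 - w)^P` binomially reduces the integral to
`J(a, l) = ∫_x^∞ (y - x)^a (1 + i y)^(-(a + l + 2)) dy`. Integrating
`(y - x)^(a+1) (1 + i y)^r` by parts, with boundary terms vanishing at `y = x` and at `∞`, gives
`J(a + 1, l) = -i (a + 1) / (a + l + 2) · J(a, l)`, hence
`J(a, l) = (-i)^(a+1) a! l! / (a + l + 1)! · (1 + i x)^(-(l + 1))`.
After summing, the coefficients become `P! / (P + a + 1)! · binom(P + a + 1, j)`: the first `P + 1`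
terms of the binomial expansion of `(2 - (1 + i x))^(P + a + 1)`, and the remaining `a + 1` terms
make up the polynomial. The theorem is the case `a = 2N - 2`, `P = n - N`.
-/

open Complex MeasureTheory Set Filter Finset Topology

namespace DiscreteSeriesIntegral

lemma one_add_I_mul_ne_zero (y : ℝ) : 1 + I * y ≠ 0 := by
  intro h
  simpa using congrArg re h

lemma one_le_norm_one_add_I_mul (y : ℝ) : 1 ≤ ‖1 + I * (y : ℂ)‖ := by
  simpa using abs_re_le_norm (1 + I * y)

lemma sq_norm_one_add_I_mul (y : ℝ) : ‖1 + I * (y : ℂ)‖ ^ 2 = 1 + y ^ 2 := by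
  rw [Complex.sq_norm, show 1 + I * (y : ℂ) = (1 : ℝ) + y * I by push_cast; ring,
    normSq_add_mul_I, one_pow]

lemma tendsto_norm_one_add_I_mul_atTop :
    Tendsto (fun y : ℝ => ‖1 + I * (y : ℂ)‖) atTop atTop :=
  tendsto_atTop_mono (fun y => (le_abs_self y).trans (by simpa using abs_im_le_norm (1 + I * y)))
    tendsto_id

section

variable (x : ℝ)

-- `y - x = -i ((1 + i y) - (1 + i x))` and `‖1 + i y‖ ≥ 1`.
lemma norm_ofReal_sub_le (y : ℝ) :
    ‖(y : ℂ) - x‖ ≤ (1 + ‖1 + I * (x : ℂ)‖) * ‖1 + I * (y : ℂ)‖ := by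
  have h : (y : ℂ) - x = -I * ((1 + I * y) - (1 + I * x)) := by
    ring_nf; rw [I_sq]; ring
  rw [h, norm_mul, norm_neg, norm_I, one_mul]
  have := one_le_norm_one_add_I_mul y
  calc _ ≤ ‖1 + I * (y : ℂ)‖ + ‖1 + I * (x : ℂ)‖ := _root_.norm_sub_le _ _
    _ ≤ _ := by nlinarith [norm_nonneg (1 + I * (x : ℂ))]

lemma norm_sub_pow_mul_zpow_le (a : ℕ) (r : ℤ) (y : ℝ) :
    ‖((y : ℂ) - x) ^ a * (1 + I * y) ^ r‖
      ≤ (1 + ‖1 + I * (x : ℂ)‖) ^ a * ‖1 + I * (y : ℂ)‖ ^ ((a : ℤ) + r) := by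
  have hy : ‖1 + I * (y : ℂ)‖ ≠ 0 := norm_ne_zero_iff.mpr (one_add_I_mul_ne_zero y)
  rw [norm_mul, norm_pow, norm_zpow, zpow_add₀ hy, zpow_natCast, ← mul_assoc, ← mul_pow]
  gcongr
  exact norm_ofReal_sub_le x y

lemma integrableOn_sub_pow_mul_zpow {a : ℕ} {r : ℤ} (h : (a : ℤ) + r ≤ -2) :
    IntegrableOn (fun y : ℝ => ((y : ℂ) - x) ^ a * (1 + I * y) ^ r) (Ioi x) := by
  have hcont : Continuous (fun y : ℝ => ((y : ℂ) - x) ^ a * (1 + I * y) ^ r) := by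
    refine ((continuous_ofReal.sub continuous_const).pow a).mul
      ((continuous_const.add (continuous_const.mul continuous_ofReal)).zpow₀ r
        fun y => Or.inl (one_add_I_mul_ne_zero y))
  refine Integrable.mono'
    ((integrable_inv_one_add_sq.const_mul ((1 + ‖1 + I * (x : ℂ)‖) ^ a)).restrict)
    hcont.aestronglyMeasurable (ae_of_all _ fun y => (norm_sub_pow_mul_zpow_le x a r y).trans ?_)
  gcongr
  calc ‖1 + I * (y : ℂ)‖ ^ ((a : ℤ) + r) ≤ ‖1 + I * (y : ℂ)‖ ^ (-2 : ℤ) :=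
        zpow_le_zpow_right₀ (one_le_norm_one_add_I_mul y) h
    _ = (1 + y ^ 2)⁻¹ := by rw [zpow_neg, zpow_ofNat, sq_norm_one_add_I_mul]

lemma tendsto_sub_pow_mul_zpow {a : ℕ} {r : ℤ} (h : (a : ℤ) + r < 0) :
    Tendsto (fun y : ℝ => ((y : ℂ) - x) ^ a * (1 + I * y) ^ r) atTop (𝓝 0) := by
  rw [tendsto_zero_iff_norm_tendsto_zero]
  have hlim := ((tendsto_zpow_atTop_zero h).comp tendsto_norm_one_add_I_mul_atTop).const_mul
    ((1 + ‖1 + I * (x : ℂ)‖) ^ a)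
  rw [mul_zero] at hlim
  exact squeeze_zero (fun _ => norm_nonneg _) (norm_sub_pow_mul_zpow_le x a r) hlim

lemma hasDerivAt_sub_pow_mul_zpow (a : ℕ) (r : ℤ) (y : ℝ) :
    HasDerivAt (fun y : ℝ => ((y : ℂ) - x) ^ a * (1 + I * y) ^ r)
      (a * ((y : ℂ) - x) ^ (a - 1) * (1 + I * y) ^ r
        + I * r * (((y : ℂ) - x) ^ a * (1 + I * y) ^ (r - 1))) y := by
  have hpow : HasDerivAt (fun z : ℂ => (z - x) ^ a) (a * ((y : ℂ) - x) ^ (a - 1)) y :=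
    (((hasDerivAt_id (y : ℂ)).sub_const (x : ℂ)).pow a).congr_deriv (by simp)
  have hzpow : HasDerivAt (fun z : ℂ => (1 + I * z) ^ r) (r * (1 + I * y) ^ (r - 1) * I) y := by
    have hlin : HasDerivAt (fun z : ℂ => 1 + I * z) I y := by
      simpa using ((hasDerivAt_id (y : ℂ)).const_mul I).const_add 1
    exact (hasDerivAt_zpow r _ (Or.inl (one_add_I_mul_ne_zero y))).comp (y : ℂ) hlin
  exact (hpow.mul hzpow).comp_ofReal.congr_deriv (by ring)

lemma integral_Ioi_one_add_I_mul_zpow {r : ℤ} (hr : r ≤ -2) :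
    ∫ y in Ioi x, (1 + I * (y : ℂ)) ^ r = I * (1 + I * x) ^ (r + 1) / (r + 1) := by
  have hr1 : (r + 1 : ℂ) ≠ 0 := by exact_mod_cast (show r + 1 ≠ 0 by omega)
  have hderiv : ∀ y ∈ Ici x, HasDerivAt
      (fun y : ℝ => (I * (r + 1))⁻¹ * (((y : ℂ) - x) ^ 0 * (1 + I * y) ^ (r + 1)))
      ((1 + I * (y : ℂ)) ^ r) y := fun y _ =>
    ((hasDerivAt_sub_pow_mul_zpow x 0 (r + 1) y).const_mul _).congr_deriv (by
      push_cast; field_simp; simp)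
  have hint : IntegrableOn (fun y : ℝ => (1 + I * (y : ℂ)) ^ r) (Ioi x) := by
    simpa using integrableOn_sub_pow_mul_zpow x (a := 0) (r := r) (by omega)
  have hlim := (tendsto_sub_pow_mul_zpow x (a := 0) (r := r + 1) (by omega)).const_mul
    (I * (r + 1))⁻¹
  rw [mul_zero] at hlim
  rw [integral_Ioi_of_hasDerivAt_of_tendsto' hderiv hint hlim]
  field_simp
  simp

lemma integral_Ioi_succ_pow_mul_zpow {a : ℕ} {r : ℤ} (h : (a : ℤ) + r ≤ -3) :
    ∫ y in Ioi x, ((y : ℂ) - x) ^ (a + 1) * (1 + I * y) ^ r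
      = I * (a + 1) / (r + 1) * ∫ y in Ioi x, ((y : ℂ) - x) ^ a * (1 + I * y) ^ (r + 1) := by
  have hr1 : (r + 1 : ℂ) ≠ 0 := by exact_mod_cast (show r + 1 ≠ 0 by omega)
  have hderiv : ∀ y ∈ Ici x,
      HasDerivAt (fun y : ℝ => ((y : ℂ) - x) ^ (a + 1) * (1 + I * y) ^ (r + 1))
      ((a + 1) * (((y : ℂ) - x) ^ a * (1 + I * y) ^ (r + 1))
        + I * (r + 1) * (((y : ℂ) - x) ^ (a + 1) * (1 + I * y) ^ r)) y := fun y _ =>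
    (hasDerivAt_sub_pow_mul_zpow x (a + 1) (r + 1) y).congr_deriv (by push_cast; simp only [add_sub_cancel_right]; ring)
  have hint₁ := integrableOn_sub_pow_mul_zpow x (a := a) (r := r + 1) (by omega)
  have hint₂ := integrableOn_sub_pow_mul_zpow x (a := a + 1) (r := r) (by push_cast; omega)
  have hibp := integral_Ioi_of_hasDerivAt_of_tendsto' hderiv
    ((hint₁.const_mul _).add (hint₂.const_mul _))
    (tendsto_sub_pow_mul_zpow x (a := a + 1) (r := r + 1) (by push_cast; omega))
  rw [integral_add (hint₁.const_mul _) (hint₂.const_mul _), integral_const_mul,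
    integral_const_mul] at hibp
  simp only [sub_self, zero_pow (Nat.succ_ne_zero a), zero_mul] at hibp
  rw [div_mul_eq_mul_div, eq_div_iff hr1]
  linear_combination (-I) * hibp
    + (r + 1) * (∫ y in Ioi x, ((y : ℂ) - x) ^ (a + 1) * (1 + I * y) ^ r) * I_sq

lemma integral_Ioi_sub_pow_mul_zpow (a l : ℕ) :
    ∫ y in Ioi x, ((y : ℂ) - x) ^ a * (1 + I * y) ^ (-(a + l + 2 : ℤ))
      = (-I) ^ (a + 1) * a.factorial * l.factorial / (a + l + 1).factorial
          * (1 + I * x) ^ (-(l + 1 : ℤ)) := by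
  induction a with
  | zero =>
    simp only [pow_zero, one_mul, Nat.cast_zero, zero_add, Nat.factorial_zero, Nat.cast_one,
      mul_one, pow_one]
    rw [integral_Ioi_one_add_I_mul_zpow x (by omega), Nat.factorial_succ]
    have hl : (l + 1 : ℂ) ≠ 0 := Nat.cast_add_one_ne_zero l
    have hf : (l.factorial : ℂ) ≠ 0 := Nat.cast_ne_zero.mpr l.factorial_ne_zero
    push_cast
    rw [show -((l : ℤ) + 2) + 1 = -(l + 1) by ring, show -((l : ℂ) + 2) + 1 = -(l + 1) by ring]
    field_simp
  | succ a ih =>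
    have hal : (a + l + 1 + 1 : ℂ) ≠ 0 := mod_cast Nat.succ_ne_zero (a + l + 1)
    have hf : ((a + l + 1).factorial : ℂ) ≠ 0 := Nat.cast_ne_zero.mpr (Nat.factorial_ne_zero _)
    rw [integral_Ioi_succ_pow_mul_zpow x (by push_cast; omega)]
    push_cast
    rw [show -((a : ℤ) + 1 + l + 2) + 1 = -(a + l + 2) by ring, ih,
      show -((a : ℂ) + 1 + l + 2) + 1 = -(a + l + 1 + 1) by ring,
      show a + 1 + l + 1 = (a + l + 1) + 1 by ring, Nat.factorial_succ (a + l + 1),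
      Nat.factorial_succ a, pow_succ (-I) (a + 1)]
    push_cast
    field_simp

end

lemma sum_range_choose_mul_pow_eq_add_pow_sub {R : Type*} [CommRing R] (u v : R) (p a : ℕ) :
    ∑ j ∈ range (p + 1), u ^ j * v ^ (p + a + 1 - j) * ((p + a + 1).choose j : R)
      = (u + v) ^ (p + a + 1)
        - ∑ k ∈ range (a + 1),
            u ^ (p + 1 + k) * v ^ (a - k) * ((p + a + 1).choose (a - k) : R) := by
  rw [eq_sub_iff_add_eq, add_pow]
  conv_rhs => rw [show p + a + 1 + 1 = (p + 1) + (a + 1) by ring, sum_range_add]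
  congr 1
  refine sum_congr rfl fun k hk => ?_
  have hk : k ≤ a := Nat.lt_succ_iff.mp (mem_range.mp hk)
  rw [show p + a + 1 - (p + 1 + k) = a - k by omega,
    ← Nat.choose_symm (show a - k ≤ p + a + 1 by omega),
    show p + a + 1 - (a - k) = p + 1 + k by omega]

lemma two_sub_pow_mul_zpow_eq_sum {K : Type*} [Field K] (w : K) (hw : w ≠ 0) (a P : ℕ) :
    (2 - w) ^ P * w ^ (-(P + a + 2 : ℤ))
      = ∑ j ∈ range (P + 1), (-1) ^ j * 2 ^ (P - j) * (P.choose j : K)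
          * w ^ (-(a + (P - j : ℕ) + 2 : ℤ)) := by
  rw [show 2 - w = -w + 2 by ring, add_pow, sum_mul]
  refine sum_congr rfl fun j hj => ?_
  have hj : j ≤ P := Nat.lt_succ_iff.mp (mem_range.mp hj)
  have hz : w ^ j * w ^ (-(P + a + 2 : ℤ)) = w ^ (-(a + (P - j : ℕ) + 2 : ℤ)) := by
    rw [← zpow_natCast, ← zpow_add₀ hw]
    push_cast [Nat.cast_sub hj]
    ring_nf
  rw [neg_pow, ← hz]
  ring

lemma choose_mul_factorial_div_factorial {K : Type*} [Field K] [CharZero K] (a j l : ℕ) :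
    ((j + l).choose j : K) * l.factorial / (a + l + 1).factorial
      = (j + l).factorial / (j + l + a + 1).factorial * ((j + l + a + 1).choose j : K) := by
  rw [Nat.cast_add_choose, show j + l + a + 1 = j + (a + l + 1) by ring, Nat.cast_add_choose]
  have h₁ : ((j + (a + l + 1)).factorial : K) ≠ 0 :=
    Nat.cast_ne_zero.mpr (Nat.factorial_ne_zero _)
  have h₂ : (l.factorial : K) ≠ 0 := Nat.cast_ne_zero.mpr l.factorial_ne_zero
  field_simp

lemma choose_factorial_zpow_eq {K : Type*} [Field K] [CharZero K] (w : K) (hw : w ≠ 0)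
    (a j l : ℕ) :
    (-1) ^ j * 2 ^ l * ((j + l).choose j : K)
        * (l.factorial / (a + l + 1).factorial * w ^ (-(l + 1 : ℤ)))
      = (j + l).factorial / (j + l + a + 1).factorial
          * (2 ^ (-(a + 1 : ℤ)) * w ^ (-((j + l : ℕ) + 1 : ℤ)))
          * ((-w) ^ j * 2 ^ (l + a + 1) * ((j + l + a + 1).choose j : K)) := by
  have hw' : w ^ (-(l + 1 : ℤ)) = w ^ (-((j + l : ℕ) + 1 : ℤ)) * w ^ j := by
    rw [← zpow_natCast w j, ← zpow_add₀ hw]; push_cast; ring_nf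
  have h2 : (2 : K) ^ l = 2 ^ (-(a + 1 : ℤ)) * 2 ^ (l + a + 1) := by
    rw [← zpow_natCast, ← zpow_natCast, ← zpow_add₀ two_ne_zero]; push_cast; ring_nf
  rw [hw', h2, neg_pow w j]
  linear_combination ((-1) ^ j * 2 ^ (-(a + 1 : ℤ)) * 2 ^ (l + a + 1)
    * w ^ (-((j + l : ℕ) + 1 : ℤ)) * w ^ j) * choose_mul_factorial_div_factorial (K := K) a j l

lemma zpow_mul_sum_choose_eq {K : Type*} [Field K] [NeZero (2 : K)] (w : K) (hw : w ≠ 0)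
    (a P : ℕ) :
    2 ^ (-(a + 1 : ℤ)) * w ^ (-(P + 1 : ℤ)) * ∑ k ∈ range (a + 1),
        (-w) ^ (P + 1 + k) * 2 ^ (a - k) * ((P + a + 1).choose (a - k) : K)
      = -((-1) ^ P / 2
          * ∑ k ∈ range (a + 1), ((P + a + 1).choose (a - k) : K) * (w / (-2)) ^ k) := by
  have h2 : (2 : K) ≠ 0 := two_ne_zero
  rw [mul_sum, mul_sum, ← sum_neg_distrib]
  refine sum_congr rfl fun k hk => ?_
  have hk : k ≤ a := Nat.lt_succ_iff.mp (mem_range.mp hk)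
  have h2pow : (2 : K) ^ (-(a + 1 : ℤ)) * 2 ^ (a - k) = (2 ^ (k + 1))⁻¹ := by
    rw [← zpow_natCast, ← zpow_add₀ h2, ← zpow_natCast, ← zpow_neg]
    push_cast [Nat.cast_sub hk]; ring_nf
  have hwpow : w ^ (-(P + 1 : ℤ)) * w ^ (P + 1 + k) = w ^ k := by
    rw [← zpow_natCast, ← zpow_add₀ hw, ← zpow_natCast]
    push_cast; ring_nf
  calc _ = (2 ^ (-(a + 1 : ℤ)) * 2 ^ (a - k)) * (w ^ (-(P + 1 : ℤ)) * w ^ (P + 1 + k))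
        * (-1) ^ (P + 1 + k) * ((P + a + 1).choose (a - k) : K) := by rw [neg_pow w]; ring
    _ = _ := by rw [h2pow, hwpow, div_neg, neg_pow (w / 2), div_pow]; field_simp; ring

lemma sum_choose_factorial_zpow_eq {K : Type*} [Field K] [CharZero K] (w : K) (hw : w ≠ 0)
    (a P : ℕ) :
    ∑ j ∈ range (P + 1), (-1) ^ j * 2 ^ (P - j) * (P.choose j : K)
        * ((P - j).factorial / (a + (P - j) + 1).factorial * w ^ (-((P - j : ℕ) + 1 : ℤ)))
      = P.factorial / (P + a + 1).factorial
          * (2 ^ (-(a + 1 : ℤ)) * (2 - w) ^ (P + a + 1) * w ^ (-(P + 1 : ℤ))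
            + (-1) ^ P / 2 * ∑ k ∈ range (a + 1),
                ((P + a + 1).choose (a - k) : K) * (w / (-2)) ^ k) := by
  have hterm : ∀ j ∈ range (P + 1), (-1) ^ j * 2 ^ (P - j) * (P.choose j : K)
        * ((P - j).factorial / (a + (P - j) + 1).factorial * w ^ (-((P - j : ℕ) + 1 : ℤ)))
      = P.factorial / (P + a + 1).factorial * (2 ^ (-(a + 1 : ℤ)) * w ^ (-(P + 1 : ℤ)))
          * ((-w) ^ j * 2 ^ (P + a + 1 - j) * ((P + a + 1).choose j : K)) := by
    intro j hj
    obtain ⟨l, rfl⟩ := Nat.exists_eq_add_of_le (Nat.lt_succ_iff.mp (mem_range.mp hj))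
    rw [Nat.add_sub_cancel_left, show j + l + a + 1 - j = l + a + 1 by omega]
    exact_mod_cast choose_factorial_zpow_eq w hw a j l
  rw [sum_congr rfl hterm, ← mul_sum, sum_range_choose_mul_pow_eq_add_pow_sub]
  linear_combination (-(P.factorial / (P + a + 1).factorial : K)) * zpow_mul_sum_choose_eq w hw a P

theorem integral_Ioi_sub_pow_mul_one_sub_pow_mul_zpow (x : ℝ) (a P : ℕ) :
    IntegrableOn (fun y : ℝ =>
      ((y : ℂ) - x) ^ a * (1 - I * y) ^ P * (1 + I * y) ^ (-(P + a + 2 : ℤ))) (Ioi x) ∧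
    ∫ y in Ioi x, ((y : ℂ) - x) ^ a * (1 - I * y) ^ P * (1 + I * y) ^ (-(P + a + 2 : ℤ))
      = (-I) ^ (a + 1) * a.factorial * (P.factorial / (P + a + 1).factorial
          * (2 ^ (-(a + 1 : ℤ)) * (1 - I * x) ^ (P + a + 1) * (1 + I * x) ^ (-(P + 1 : ℤ))
            + (-1) ^ P / 2 * ∑ k ∈ range (a + 1),
                ((P + a + 1).choose (a - k) : ℂ) * ((1 + I * x) / (-2)) ^ k)) := by
  have hexpand : (fun y : ℝ =>
      ((y : ℂ) - x) ^ a * (1 - I * y) ^ P * (1 + I * y) ^ (-(P + a + 2 : ℤ)))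
      = fun y : ℝ => ∑ j ∈ range (P + 1), (-1) ^ j * 2 ^ (P - j) * (P.choose j : ℂ)
          * (((y : ℂ) - x) ^ a * (1 + I * y) ^ (-(a + (P - j : ℕ) + 2 : ℤ))) := by
    ext y
    rw [mul_assoc, show 1 - I * y = 2 - (1 + I * y) by ring,
      two_sub_pow_mul_zpow_eq_sum _ (one_add_I_mul_ne_zero y), mul_sum]
    exact sum_congr rfl fun j _ => by ring
  have hint : ∀ j ∈ range (P + 1), IntegrableOn (fun y : ℝ =>
      (-1) ^ j * 2 ^ (P - j) * (P.choose j : ℂ)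
        * (((y : ℂ) - x) ^ a * (1 + I * y) ^ (-(a + (P - j : ℕ) + 2 : ℤ)))) (Ioi x) :=
    fun j _ => (integrableOn_sub_pow_mul_zpow x (by omega)).const_mul _
  rw [hexpand]
  refine ⟨integrable_finsetSum _ hint, ?_⟩
  simp only [integral_finsetSum _ hint, integral_const_mul, integral_Ioi_sub_pow_mul_zpow]
  rw [show 1 - I * x = 2 - (1 + I * x) by ring,
    ← sum_choose_factorial_zpow_eq _ (one_add_I_mul_ne_zero x), mul_sum]
  exact sum_congr rfl fun j _ => by ring

lemma one_sub_I_mul_pow_mul_zpow (x : ℝ) (P K : ℕ) :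
    (1 - I * x) ^ (P + 2 * K + 1) * (1 + I * x) ^ (-(P + 1 : ℤ))
      = (1 - I * x) ^ (K + 1 + P) * (1 + I * x) ^ (-((K + 1 + P : ℕ) : ℤ))
          * (1 + (x : ℂ) ^ 2) ^ K := by
  have hw := one_add_I_mul_ne_zero x
  rw [show (1 : ℂ) + x ^ 2 = (1 - I * x) * (1 + I * x) by ring_nf; rw [I_sq]; ring, mul_pow,
    show -((K + 1 + P : ℕ) : ℤ) = -(P + 1 : ℤ) - K by push_cast; ring, zpow_sub₀ hw,
    zpow_natCast]
  field_simp
  ring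

end DiscreteSeriesIntegral

open DiscreteSeriesIntegral

/-- Closed form of the integral computing the action of `𝔏_N` (the inverse of the
intertwining operator `∂_x^{2N−1} : F_{1−N} → F_N`) on the discrete-series basis
function `ψ_n^{(N)}`, for integers `n ≥ N ≥ 1`. -/
theorem stmt19 (N n : ℕ) (hN : 1 ≤ N) (hn : N ≤ n) (x : ℝ) :
    IntegrableOn (fun y : ℝ =>
      ((y : ℂ) - x) ^ (2 * N - 2) * (1 - Complex.I * y) ^ ((n : ℤ) - N)
        * (1 + Complex.I * y) ^ (-((n : ℤ) + N))) (Set.Ioi x) ∧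
    (∫ y in Set.Ioi x,
      ((y : ℂ) - x) ^ (2 * N - 2) * (1 - Complex.I * y) ^ ((n : ℤ) - N)
        * (1 + Complex.I * y) ^ (-((n : ℤ) + N)))
      = Complex.I * (-1) ^ N * (Nat.factorial (2 * N - 2) : ℂ)
          * ((Nat.factorial (n - N) : ℂ) / (Nat.factorial (N + n - 1) : ℂ))
          * ((2 : ℂ) ^ ((1 : ℤ) - 2 * N) * (1 - Complex.I * x) ^ n
              * (1 + Complex.I * x) ^ (-(n : ℤ)) * (1 + (x : ℂ) ^ 2) ^ (N - 1)
            + ((-1 : ℂ) ^ (n + N) / 2)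
              * ∑ k ∈ Finset.range (2 * N - 1),
                  (Nat.choose (n + N - 1) (2 * N - 2 - k) : ℂ)
                    * ((1 + Complex.I * x) / (-2)) ^ k) := by
  obtain ⟨K, rfl⟩ : ∃ K, N = K + 1 := ⟨N - 1, by omega⟩
  obtain ⟨P, rfl⟩ := Nat.exists_eq_add_of_le hn
  rw [show 2 * (K + 1) - 2 = 2 * K by omega, show 2 * (K + 1) - 1 = 2 * K + 1 by omega,
    Nat.add_sub_cancel_left, Nat.add_sub_cancel,
    show K + 1 + (K + 1 + P) - 1 = P + 2 * K + 1 by omega,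
    show K + 1 + P + (K + 1) - 1 = P + 2 * K + 1 by omega]
  have hintegrand : (fun y : ℝ => ((y : ℂ) - x) ^ (2 * K)
      * (1 - I * y) ^ (((K + 1 + P : ℕ) : ℤ) - (K + 1 : ℕ))
      * (1 + I * y) ^ (-(((K + 1 + P : ℕ) : ℤ) + (K + 1 : ℕ))))
      = fun y : ℝ => ((y : ℂ) - x) ^ (2 * K) * (1 - I * y) ^ P
          * (1 + I * y) ^ (-(P + (2 * K : ℕ) + 2 : ℤ)) := by
    ext y
    rw [show ((K + 1 + P : ℕ) : ℤ) - (K + 1 : ℕ) = P by push_cast; ring, zpow_natCast]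
    push_cast; ring_nf
  obtain ⟨hint, hval⟩ := integral_Ioi_sub_pow_mul_one_sub_pow_mul_zpow x (2 * K) P
  rw [hintegrand]
  refine ⟨hint, hval.trans ?_⟩
  have hsign : (-I) ^ (2 * K + 1) = I * (-1) ^ (K + 1) := by
    rw [pow_succ, pow_mul, neg_sq, I_sq]; ring
  have hparity : (-1 : ℂ) ^ (K + 1 + P + (K + 1)) = (-1) ^ P := by
    rw [show K + 1 + P + (K + 1) = P + 2 * (K + 1) by ring, pow_add, pow_mul]; simp
  have htwo : (2 : ℂ) ^ (1 - 2 * ((K + 1 : ℕ) : ℤ)) = 2 ^ (-((2 * K : ℕ) + 1 : ℤ)) := by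
    push_cast; ring_nf
  rw [hsign, hparity, htwo]
  linear_combination I * (-1) ^ (K + 1) * (2 * K).factorial
    * (P.factorial / (P + 2 * K + 1).factorial) * (2 : ℂ) ^ (-((2 * K : ℕ) + 1 : ℤ))
    * one_sub_I_mul_pow_mul_zpow x P K
end
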